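/- arXiv:2106.15374 — 11 statements merged into one kernel-verified Lean document; each statement's English description precedes it below -/
import Mathlib

section
/- Let f be a Boolean network on n nodes with h outputs whose dependency graph is G (marked at the output indices {1,…,h}). Then f is structurally observable if and only if G satisfies both Property P1 and Property P2. -/
/-- `u` is the unique in-neighbor of `w` in the digraph with edge relation `E`. -/
def UniqueInNbr {V : Type*} (E : V → V → Prop) (u w : V) : Prop :=
  E u w ∧ ∀ u', E u' w → u' = u

/-- Property P1: every simple (non-marked) vertex `v` has some vertex `v'`
whose unique in-neighbor is `v`. -/
def SatisfiesP1 {V : Type*} (E : V → V → Prop) (O : Set V) : Prop :=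
  ∀ v, v ∉ O → ∃ v', UniqueInNbr E v v'

/-- A directed (simple) cycle of length `m + 1`, given by an injective cyclic
sequence of vertices with consecutive edges (indices mod `m + 1`). -/
def IsCycle {V : Type*} (E : V → V → Prop) {m : ℕ} (c : Fin (m + 1) → V) : Prop :=
  Function.Injective c ∧ ∀ j, E (c j) (c (j + 1))

/-- A cycle `c` satisfies Property P2 if some vertex `v` off the cycle has a
vertex of the cycle as its unique in-neighbor. -/
def CycleSatisfiesP2 {V : Type*} (E : V → V → Prop) {m : ℕ} (c : Fin (m + 1) → V) : Prop :=
  ∃ v, (∀ j, c j ≠ v) ∧ ∃ j, UniqueInNbr E (c j) v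

/-- Property P2: every directed cycle consisting entirely of simple vertices
satisfies Property P2. -/
def SatisfiesP2 {V : Type*} (E : V → V → Prop) (O : Set V) : Prop :=
  ∀ (m : ℕ) (c : Fin (m + 1) → V), IsCycle E c → (∀ j, c j ∉ O) → CycleSatisfiesP2 E c

/-- Coordinate `i` is essential for the update function `g`. -/
def Essential {n : ℕ} {α : Type*} (g : (Fin n → α) → α) (i : Fin n) : Prop :=
  ∃ x y : Fin n → α, (∀ k, k ≠ i → x k = y k) ∧ g x ≠ g y

/-- Edge relation of the dependency (interaction) graph of the network `f`:
there is an edge `(i, j)` iff coordinate `i` is essential for `f j`. -/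
def DepEdge {n : ℕ} {α : Type*} (f : Fin n → (Fin n → α) → α) (i j : Fin n) : Prop :=
  Essential (f j) i

/-- One synchronous step of the network. -/
def netStep {n : ℕ} {α : Type*} (f : Fin n → (Fin n → α) → α) (x : Fin n → α) :
    Fin n → α :=
  fun i => f i x

/-- Observability: any two distinct initial states produce output sequences
(the values at the first `h` coordinates) that differ at some time instant. -/
def Observable {n : ℕ} {α : Type*} (f : Fin n → (Fin n → α) → α) (h : ℕ) : Prop :=
  ∀ x y : Fin n → α, x ≠ y →
    ∃ (k : ℕ) (q : Fin n), (q : ℕ) < h ∧ (netStep f)^[k] x q ≠ (netStep f)^[k] y q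

/-- Structural observability of a Boolean network: every Boolean network with
the same dependency graph (and same output index set) is observable. -/
def StructurallyObservable {n : ℕ} (f : Fin n → (Fin n → Bool) → Bool) (h : ℕ) : Prop :=
  ∀ g : Fin n → (Fin n → Bool) → Bool,
    (∀ i j, DepEdge g i j ↔ DepEdge f i j) → Observable g h

namespace BNAux
open Finset

variable {n : ℕ}

lemma eq_of_agree_aux (g : (Fin n → Bool) → Bool) :
    ∀ (D : Finset (Fin n)) (x y : Fin n → Bool), (∀ i, x i ≠ y i → i ∈ D) →
      (∀ i, Essential g i → x i = y i) → g x = g y := by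
  classical
  intro D
  induction D using Finset.strongInduction with
  | _ D ih =>
    intro x y hD hess
    by_cases hxy : x = y
    · rw [hxy]
    · obtain ⟨i, hi⟩ : ∃ i, x i ≠ y i := by
        by_contra hc; push_neg at hc; exact hxy (funext hc)
      have hiD : i ∈ D := hD i hi
      have hni : ¬ Essential g i := fun he => hi (hess i he)
      have h1 : g y = g (Function.update y i (x i)) := by
        by_contra hne
        exact hni ⟨y, Function.update y i (x i),
          fun k hk => (Function.update_of_ne hk _ _).symm, hne⟩
      rw [h1]
      refine ih (D.erase i) (Finset.erase_ssubset hiD) x _ ?_ ?_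
      · intro k hk
        rcases eq_or_ne k i with rfl | hki
        · simp [Function.update_self] at hk
        · exact Finset.mem_erase.mpr ⟨hki, hD k (by
            simpa [Function.update_of_ne hki] using hk)⟩
      · intro j hj
        rcases eq_or_ne j i with rfl | hji
        · simp [Function.update_self]
        · rw [Function.update_of_ne hji]; exact hess j hj

lemma eq_of_agree (g : (Fin n → Bool) → Bool) (x y : Fin n → Bool)
    (h : ∀ i, Essential g i → x i = y i) : g x = g y :=
  eq_of_agree_aux g Finset.univ x y (fun i _ => Finset.mem_univ i) h

lemma not_essential_of_depends (g : (Fin n → Bool) → Bool) (S : Finset (Fin n))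
    (hg : ∀ x y : Fin n → Bool, (∀ s ∈ S, x s = y s) → g x = g y)
    (i : Fin n) (hi : i ∉ S) : ¬ Essential g i := by
  rintro ⟨x, y, hxy, hne⟩
  exact hne (hg x y fun s hs => hxy s (fun h => hi (h ▸ hs)))

/-- number of `false` coordinates within `S`. -/
def zc (S : Finset (Fin n)) (x : Fin n → Bool) : ℕ :=
  (S.filter fun s => x s = false).card

lemma zc_congr {S : Finset (Fin n)} {x y : Fin n → Bool}
    (h : ∀ s ∈ S, x s = y s) : zc S x = zc S y := by
  unfold zc
  congr 1
  apply Finset.filter_congr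
  intro s hs
  rw [h s hs]

lemma zc_ones' (S : Finset (Fin n)) : zc S (fun _ => true) = 0 := by
  simp [zc]

lemma zc_update_false (S : Finset (Fin n)) (x : Fin n → Bool) (s : Fin n)
    (hx : x s = true) :
    zc S (Function.update x s false) = zc S x + (if s ∈ S then 1 else 0) := by
  classical
  unfold zc
  have hset : (S.filter fun i => (Function.update x s false) i = false)
      = (S.filter fun i => x i = false) ∪ (S.filter (· = s)) := by
    ext i
    rcases eq_or_ne i s with rfl | his
    · simp [Function.update_self, hx]
    · simp [Function.update_of_ne his, his]
  rw [hset, Finset.card_union_of_disjoint, Finset.filter_eq']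
  · split <;> simp
  · rw [Finset.disjoint_left]
    rintro i hi1 hi2
    simp only [Finset.mem_filter] at hi1 hi2
    rw [hi2.2] at hi1
    rw [hx] at hi1
    exact absurd hi1.2 (by simp)

/-- all-ones state -/
def ones : Fin n → Bool := fun _ => true

lemma zc_ones (S : Finset (Fin n)) : zc S (ones (n := n)) = 0 := by
  simp [zc, ones]

lemma zc_upd_ones (S : Finset (Fin n)) (t : Fin n) :
    zc S (Function.update (ones (n := n)) t false) = (if t ∈ S then 1 else 0) := by
  rw [zc_update_false S _ t rfl, zc_ones]
  simp

/-- parity function: true iff evenly many zeros in `S`. -/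
def evenF (S : Finset (Fin n)) (x : Fin n → Bool) : Bool := decide (zc S x % 2 = 0)

lemma evenF_depends (S : Finset (Fin n)) (x y : Fin n → Bool)
    (h : ∀ s ∈ S, x s = y s) : evenF S x = evenF S y := by
  unfold evenF; rw [zc_congr h]

lemma evenF_ones (S : Finset (Fin n)) : evenF S (ones (n := n)) = true := by
  simp [evenF, zc_ones]

lemma essential_evenF (S : Finset (Fin n)) (i : Fin n) :
    Essential (evenF S) i ↔ i ∈ S := by
  constructor
  · intro he
    by_contra hi
    exact not_essential_of_depends _ S (evenF_depends S) i hi he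
  · intro hi
    refine ⟨ones, Function.update ones i false, fun k hk => (Function.update_of_ne hk _ _).symm, ?_⟩
    rw [evenF_ones]
    simp [evenF, zc_upd_ones, hi]

/-- at most one zero in `S`. -/
def amoF (S : Finset (Fin n)) (x : Fin n → Bool) : Bool := decide (zc S x ≤ 1)

lemma amoF_depends (S : Finset (Fin n)) (x y : Fin n → Bool)
    (h : ∀ s ∈ S, x s = y s) : amoF S x = amoF S y := by
  unfold amoF; rw [zc_congr h]

lemma amoF_ones (S : Finset (Fin n)) : amoF S (ones (n := n)) = true := by
  simp [amoF, zc_ones]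

lemma amoF_upd_ones (S : Finset (Fin n)) (t : Fin n) :
    amoF S (Function.update (ones (n := n)) t false) = true := by
  simp only [amoF, zc_upd_ones]
  split <;> simp

lemma essential_amoF (S : Finset (Fin n)) (hS : ∃ a ∈ S, ∃ b ∈ S, a ≠ b) (i : Fin n) :
    Essential (amoF S) i ↔ i ∈ S := by
  constructor
  · intro he
    by_contra hi
    exact not_essential_of_depends _ S (amoF_depends S) i hi he
  · intro hi
    obtain ⟨a, ha, b, hb, hab⟩ := hS
    -- pick s' ∈ S with s' ≠ i
    obtain ⟨s', hs', hs'i⟩ : ∃ s' ∈ S, s' ≠ i := by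
      rcases eq_or_ne a i with rfl | hai
      · exact ⟨b, hb, fun hbe => hab hbe.symm⟩
      · exact ⟨a, ha, hai⟩
    refine ⟨Function.update ones s' false,
      Function.update (Function.update ones s' false) i false,
      fun k hk => (Function.update_of_ne hk _ _).symm, ?_⟩
    have h1 : zc S (Function.update (ones (n := n)) s' false) = 1 := by
      rw [zc_upd_ones]; simp [hs']
    have h2 : zc S (Function.update (Function.update (ones (n := n)) s' false) i false) = 2 := by
      rw [zc_update_false S _ i (by rw [Function.update_of_ne (Ne.symm hs'i)]; rfl), h1]
      simp [hi]
    simp [amoF, h1, h2]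

/-- cycle-vertex function with distinguished input `p`. -/
def cycF (p : Fin n) (S : Finset (Fin n)) (x : Fin n → Bool) : Bool :=
  x p || decide (zc (S.erase p) x % 2 = 1)

lemma cycF_depends (p : Fin n) (hp : p ∈ S) (x y : Fin n → Bool)
    (h : ∀ s ∈ S, x s = y s) : cycF p S x = cycF p S y := by
  unfold cycF
  rw [h p hp, zc_congr (fun s hs => h s (Finset.mem_of_mem_erase hs))]

lemma cycF_ones (p : Fin n) (S : Finset (Fin n)) : cycF p S (ones (n := n)) = true := by
  simp [cycF, ones]

lemma cycF_upd_ones (p : Fin n) (S : Finset (Fin n)) (t : Fin n) :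
    cycF p S (Function.update (ones (n := n)) t false) = (if t = p then false else true) := by
  rcases eq_or_ne t p with rfl | htp
  · simp only [cycF, Function.update_self, if_pos rfl, Bool.false_or]
    rw [zc_upd_ones]
    simp
  · simp only [cycF, Function.update_of_ne (Ne.symm htp), if_neg htp]
    simp [ones]

lemma essential_cycF (p : Fin n) (S : Finset (Fin n)) (hp : p ∈ S) (i : Fin n) :
    Essential (cycF p S) i ↔ i ∈ S := by
  constructor
  · intro he
    by_contra hi
    exact not_essential_of_depends _ S (cycF_depends p hp) i hi he
  · intro hi
    rcases eq_or_ne i p with rfl | hip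
    · refine ⟨ones, Function.update ones i false,
        fun k hk => (Function.update_of_ne hk _ _).symm, ?_⟩
      rw [cycF_ones, cycF_upd_ones]
      simp
    · refine ⟨Function.update ones p false,
        Function.update (Function.update ones p false) i false,
        fun k hk => (Function.update_of_ne hk _ _).symm, ?_⟩
      have hz1 : zc (S.erase p) (Function.update (ones (n := n)) p false) = 0 := by
        rw [zc_upd_ones]; simp
      have hz2 : zc (S.erase p)
          (Function.update (Function.update (ones (n := n)) p false) i false) = 1 := by
        rw [zc_update_false _ _ i (by rw [Function.update_of_ne hip]; rfl), hz1]
        simp [Finset.mem_erase, hip, hi]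
      simp only [cycF, hz1, hz2]
      rw [Function.update_of_ne (Ne.symm hip), Function.update_self]
      simp

/-- masked function for the ¬P1 construction: `v₀` is masked by `u` at the all-ones state. -/
def maskF (v₀ u : Fin n) (S : Finset (Fin n)) (x : Fin n → Bool) : Bool :=
  (x v₀ && !(x u)) ^^ decide (zc ((S.erase v₀).erase u) x % 2 = 1)

lemma maskF_depends (v₀ u : Fin n) (hv : v₀ ∈ S) (hu : u ∈ S) (x y : Fin n → Bool)
    (h : ∀ s ∈ S, x s = y s) : maskF v₀ u S x = maskF v₀ u S y := by
  unfold maskF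
  rw [h v₀ hv, h u hu, zc_congr (fun s hs =>
    h s (Finset.mem_of_mem_erase (Finset.mem_of_mem_erase hs)))]

lemma maskF_mask (v₀ u : Fin n) (S : Finset (Fin n)) (huv : u ≠ v₀) :
    maskF v₀ u S (ones (n := n)) = maskF v₀ u S (Function.update ones v₀ false) := by
  have hz : zc ((S.erase v₀).erase u) (Function.update (ones (n := n)) v₀ false) = 0 := by
    rw [zc_upd_ones]; simp [Finset.mem_erase]
  simp only [maskF, zc_ones, hz, Function.update_self, Function.update_of_ne huv]
  simp [ones]

lemma essential_maskF (v₀ u : Fin n) (S : Finset (Fin n)) (hv : v₀ ∈ S) (hu : u ∈ S)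
    (huv : u ≠ v₀) (i : Fin n) : Essential (maskF v₀ u S) i ↔ i ∈ S := by
  constructor
  · intro he
    by_contra hi
    exact not_essential_of_depends _ S (maskF_depends v₀ u hv hu) i hi he
  · intro hi
    have hvT : v₀ ∉ (S.erase v₀).erase u := by simp [Finset.mem_erase]
    have huT : u ∉ (S.erase v₀).erase u := by simp [Finset.mem_erase]
    by_cases hiv : i = v₀
    · subst hiv
      refine ⟨Function.update ones u false,
        Function.update (Function.update ones u false) i false,
        fun k hk => (Function.update_of_ne hk _ _).symm, ?_⟩
      have hz1 : zc ((S.erase i).erase u) (Function.update (ones (n := n)) u false) = 0 := by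
        rw [zc_upd_ones]; simp [huT]
      have hz2 : zc ((S.erase i).erase u)
          (Function.update (Function.update (ones (n := n)) u false) i false) = 0 := by
        rw [zc_update_false _ _ i (by rw [Function.update_of_ne (Ne.symm huv)]; rfl), hz1]
        simp [hvT]
      simp only [maskF, hz1, hz2, Function.update_apply, ones]
      simp [huv, Ne.symm huv]
    by_cases hiu : i = u
    · subst hiu
      refine ⟨ones, Function.update ones i false,
        fun k hk => (Function.update_of_ne hk _ _).symm, ?_⟩
      have hz : zc ((S.erase v₀).erase i) (Function.update (ones (n := n)) i false) = 0 := by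
        rw [zc_upd_ones]; simp [huT]
      simp only [maskF, zc_ones, hz, Function.update_apply, ones]
      have h1 : ¬ v₀ = i := fun h => hiv h.symm
      simp [hiv, h1]
    · have hiT : i ∈ (S.erase v₀).erase u := by simp [Finset.mem_erase, hiv, hiu, hi]
      refine ⟨ones, Function.update ones i false,
        fun k hk => (Function.update_of_ne hk _ _).symm, ?_⟩
      have hz : zc ((S.erase v₀).erase u) (Function.update (ones (n := n)) i false) = 1 := by
        rw [zc_upd_ones]; simp [hiT]
      simp only [maskF, zc_ones, hz, Function.update_apply, ones]
      have h1 : ¬ v₀ = i := fun h => hiv h.symm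
      have h2 : ¬ u = i := fun h => hiu h.symm
      simp [hiv, hiu, h1, h2]

lemma empty_of_closed {n : ℕ} {E : Fin n → Fin n → Prop} {O : Set (Fin n)}
    (hP2 : SatisfiesP2 E O) :
    ∀ S : Finset (Fin n), (∀ v ∈ S, v ∉ O) →
      (∀ v ∈ S, ∀ w, UniqueInNbr E v w → w ∈ S) →
      (∀ v ∈ S, ∃ w, UniqueInNbr E v w) → S = ∅ := by
  classical
  intro S
  induction S using Finset.strongInduction with
  | _ S ih =>
    intro hO hclosed hsucc
    by_contra hSne
    obtain ⟨v₀, hv₀⟩ := Finset.nonempty_of_ne_empty hSne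
    have hstep : ∀ v : {x // x ∈ S}, ∃ w : {x // x ∈ S}, UniqueInNbr E v.1 w.1 := by
      rintro ⟨v, hv⟩
      obtain ⟨w, hw⟩ := hsucc v hv
      exact ⟨⟨w, hclosed v hv w hw⟩, hw⟩
    choose t ht using hstep
    obtain ⟨i, j, hij, hieq⟩ : ∃ i j : ℕ, i < j ∧ t^[i] ⟨v₀, hv₀⟩ = t^[j] ⟨v₀, hv₀⟩ := by
      obtain ⟨a, b, hab, heq⟩ := Finite.exists_ne_map_eq_of_infinite
        (fun k : ℕ => t^[k] ⟨v₀, hv₀⟩)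
      rcases lt_or_gt_of_ne hab with h | h
      · exact ⟨a, b, h, heq⟩
      · exact ⟨b, a, h, heq.symm⟩
    obtain ⟨p, hper⟩ : ∃ p : {x // x ∈ S}, t^[j - i] p = p := by
      refine ⟨t^[i] ⟨v₀, hv₀⟩, ?_⟩
      rw [← Function.iterate_add_apply]
      have hji : j - i + i = j := by omega
      rw [hji, ← hieq]
    have hex : ∃ d, 0 < d ∧ t^[d] p = p := ⟨j - i, by omega, hper⟩
    set d := Nat.find hex with hd
    have hdpos : 0 < d := (Nat.find_spec hex).1
    have hdper : t^[d] p = p := (Nat.find_spec hex).2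
    have hmin : ∀ a, 0 < a → a < d → t^[a] p ≠ p := by
      intro a ha had hcon
      exact Nat.find_min hex had ⟨ha, hcon⟩
    have key : ∀ a b : ℕ, a < b → b < d → t^[a] p ≠ t^[b] p := by
      intro a b hab hbd hcon
      have h1 : t^[(d - b) + a] p = p := by
        rw [Function.iterate_add_apply, hcon, ← Function.iterate_add_apply]
        have : d - b + b = d := by omega
        rw [this, hdper]
      exact hmin (d - b + a) (by omega) (by omega) h1
    obtain ⟨m, hm⟩ : ∃ m, d = m + 1 := ⟨d - 1, by omega⟩
    set c : Fin (m + 1) → Fin n := fun j => (t^[j.1] p).1 with hc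
    have hcS : ∀ j, c j ∈ S := fun j => (t^[j.1] p).2
    have hcinj : Function.Injective c := by
      intro a b hab
      have hsub : t^[a.1] p = t^[b.1] p := Subtype.ext hab
      have ha' : a.1 < d := by have := a.2; omega
      have hb' : b.1 < d := by have := b.2; omega
      rcases Nat.lt_trichotomy a.1 b.1 with h | h | h
      · exact absurd hsub (key _ _ h hb')
      · exact Fin.ext h
      · exact absurd hsub.symm (key _ _ h ha')
    have hcycstep : ∀ j : Fin (m + 1), t^[(j + 1).1] p = t (t^[j.1] p) := by
      intro j
      rcases Nat.lt_or_ge j.1 m with h | h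
      · have hv : (j + 1).1 = j.1 + 1 :=
          Fin.val_add_one_of_lt (by rw [Fin.lt_def, Fin.val_last]; exact h)
        rw [hv, Function.iterate_succ_apply']
      · have hjm : j = Fin.last m := by
          apply Fin.ext
          have := j.2
          simp only [Fin.val_last]
          omega
        rw [hjm, Fin.last_add_one]
        show t^[(0 : Fin (m + 1)).1] p = t (t^[m] p)
        have h5 : t^[m + 1] p = p := by rw [← hm]; exact hdper
        calc t^[(0 : Fin (m + 1)).1] p = p := rfl
          _ = t^[m + 1] p := h5.symm
          _ = t (t^[m] p) := Function.iterate_succ_apply' t m p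
    have hedge : ∀ j : Fin (m + 1), UniqueInNbr E (c j) (c (j + 1)) := by
      intro j
      show UniqueInNbr E ((t^[j.1] p).1) ((t^[(j + 1).1] p).1)
      rw [hcycstep j]
      exact ht _
    have hcyc : IsCycle E c := ⟨hcinj, fun j => (hedge j).1⟩
    have huniq_into : ∀ (jj : Fin (m + 1)) (w : Fin n), UniqueInNbr E w (c jj) → w = c (jj - 1) := by
      intro jj w hw
      have hedge' : E (c (jj - 1)) (c jj) := by
        have h2 := (hedge (jj - 1)).1
        rwa [sub_add_cancel] at h2
      exact (hw.2 _ hedge').symm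
    set S' : Finset (Fin n) := S.filter (fun x => ∀ jj, c jj ≠ x) with hS'
    have hS'sub : S' ⊆ S := Finset.filter_subset _ _
    have hnotc : ∀ v ∈ S', ∀ jj, c jj ≠ v := by
      intro v hv
      exact (Finset.mem_filter.mp hv).2
    have hclosed' : ∀ v ∈ S', ∀ w, UniqueInNbr E v w → w ∈ S' := by
      intro v hv w hw
      have hwS : w ∈ S := hclosed v (hS'sub hv) w hw
      rw [hS', Finset.mem_filter]
      refine ⟨hwS, fun jj hjj => ?_⟩
      have := huniq_into jj v (hjj ▸ hw)
      exact hnotc v hv (jj - 1) this.symm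
    have hS'ss : S' ⊂ S := by
      rw [Finset.ssubset_iff_of_subset hS'sub]
      refine ⟨c 0, hcS 0, ?_⟩
      rw [hS', Finset.mem_filter]
      push_neg
      intro _
      exact ⟨0, rfl⟩
    have hS'empty : S' = ∅ :=
      ih S' hS'ss (fun v hv => hO v (hS'sub hv)) hclosed' (fun v hv => hsucc v (hS'sub hv))
    obtain ⟨v, hvoff, jj, huin⟩ := hP2 m c hcyc (fun j => hO _ (hcS j))
    have hvS : v ∈ S := hclosed (c jj) (hcS jj) v huin
    have : v ∈ S' := Finset.mem_filter.mpr ⟨hvS, hvoff⟩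
    rw [hS'empty] at this
    exact absurd this (Finset.notMem_empty v)

section Main

variable {n h : ℕ}

/-- reaching a marked vertex along a chain of unique-in-neighbor relations -/
inductive Reaches (E : Fin n → Fin n → Prop) (O : Set (Fin n)) : Fin n → Prop where
  | base : ∀ v w, UniqueInNbr E v w → w ∈ O → Reaches E O v
  | step : ∀ v w, UniqueInNbr E v w → Reaches E O w → Reaches E O v

lemma all_reach {E : Fin n → Fin n → Prop} {O : Set (Fin n)}
    (hP1 : SatisfiesP1 E O) (hP2 : SatisfiesP2 E O) :
    ∀ v, v ∉ O → Reaches E O v := by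
  classical
  set S : Finset (Fin n) := Finset.univ.filter (fun v => v ∉ O ∧ ¬ Reaches E O v) with hS
  have hSmem : ∀ v, v ∈ S ↔ (v ∉ O ∧ ¬ Reaches E O v) := by
    intro v; rw [hS, Finset.mem_filter]; simp
  have hempty : S = ∅ := by
    apply empty_of_closed hP2 S
    · intro v hv; exact ((hSmem v).mp hv).1
    · intro v hv w hw
      obtain ⟨hvO, hvR⟩ := (hSmem v).mp hv
      rw [hSmem]
      constructor
      · intro hwO; exact hvR (Reaches.base v w hw hwO)
      · intro hwR; exact hvR (Reaches.step v w hw hwR)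
    · intro v hv; exact hP1 v ((hSmem v).mp hv).1
  intro v hvO
  by_contra hvR
  have : v ∈ S := (hSmem v).mpr ⟨hvO, hvR⟩
  rw [hempty] at this
  exact absurd this (Finset.notMem_empty v)

lemma step_ne (g : Fin n → (Fin n → Bool) → Bool) {v w : Fin n}
    (hw : UniqueInNbr (DepEdge g) v w) {x y : Fin n → Bool} (hxy : x v ≠ y v) :
    netStep g x w ≠ netStep g y w := by
  obtain ⟨a, b, hab, gne⟩ := hw.1
  have hav : a v ≠ b v := by
    intro hcon
    apply gne
    apply congrArg
    funext k
    rcases eq_or_ne k v with rfl | hk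
    · exact hcon
    · exact hab k hk
  have honly : ∀ i, Essential (g w) i → i = v := fun i hi => hw.2 i hi
  have key : ∀ z : Fin n → Bool, z v = a v → g w z = g w a := by
    intro z hz
    exact eq_of_agree (g w) z a (fun i hi => by rw [honly i hi]; exact hz)
  have key' : ∀ z : Fin n → Bool, z v = b v → g w z = g w b := by
    intro z hz
    exact eq_of_agree (g w) z b (fun i hi => by rw [honly i hi]; exact hz)
  have hbool : ∀ z : Fin n → Bool, z v = a v ∨ z v = b v := by
    intro z
    by_cases hza : z v = a v
    · exact Or.inl hza
    · right
      clear key key' honly gne hab hxy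
      cases hzz : z v <;> cases haa : a v <;> cases hbb : b v <;> simp_all
  show g w x ≠ g w y
  rcases hbool x with hx | hx <;> rcases hbool y with hy | hy
  · exact absurd (hx.trans hy.symm) hxy
  · rw [key x hx, key' y hy]; exact gne
  · rw [key' x hx, key y hy]; exact fun hc => gne hc.symm
  · exact absurd (hx.trans hy.symm) hxy

lemma reaches_distinguish (g : Fin n → (Fin n → Bool) → Bool) :
    ∀ v, Reaches (DepEdge g) {i : Fin n | (i : ℕ) < h} v →
      ∀ x y : Fin n → Bool, x v ≠ y v →
        ∃ (k : ℕ) (q : Fin n), (q : ℕ) < h ∧ (netStep g)^[k] x q ≠ (netStep g)^[k] y q := by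
  intro v hv
  induction hv with
  | base v w huin hw =>
    intro x y hxy
    exact ⟨1, w, hw, by simpa using step_ne g huin hxy⟩
  | step v w huin _ ih =>
    intro x y hxy
    obtain ⟨k, q, hq, hne⟩ := ih (netStep g x) (netStep g y) (step_ne g huin hxy)
    refine ⟨k + 1, q, hq, ?_⟩
    rw [Function.iterate_succ_apply, Function.iterate_succ_apply]
    exact hne

lemma observable_of_P1P2 (g : Fin n → (Fin n → Bool) → Bool)
    (hP1 : SatisfiesP1 (DepEdge g) {i : Fin n | (i : ℕ) < h})
    (hP2 : SatisfiesP2 (DepEdge g) {i : Fin n | (i : ℕ) < h}) :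
    Observable g h := by
  intro x y hxy
  obtain ⟨v, hv⟩ : ∃ v, x v ≠ y v := by
    by_contra hc; push_neg at hc; exact hxy (funext hc)
  by_cases hvO : (v : ℕ) < h
  · exact ⟨0, v, hvO, hv⟩
  · exact reaches_distinguish g v (all_reach hP1 hP2 v hvO) x y hv

/-- the ¬P1 construction -/
lemma notP1_unobs (f : Fin n → (Fin n → Bool) → Bool) (v₀ : Fin n)
    (hv₀ : ¬ ((v₀ : ℕ) < h)) (hno : ∀ w, ¬ UniqueInNbr (DepEdge f) v₀ w) :
    ∃ g : Fin n → (Fin n → Bool) → Bool,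
      (∀ i j, DepEdge g i j ↔ DepEdge f i j) ∧ ¬ Observable g h := by
  classical
  set S : Fin n → Finset (Fin n) := fun j => Finset.univ.filter (fun i => DepEdge f i j)
    with hSdef
  have hSmem : ∀ i j, i ∈ S j ↔ DepEdge f i j := by
    intro i j; rw [hSdef, Finset.mem_filter]; simp
  have hex : ∀ j, v₀ ∈ S j → ∃ u, u ∈ S j ∧ u ≠ v₀ := by
    intro j hj
    have hE : DepEdge f v₀ j := (hSmem v₀ j).mp hj
    have := hno j
    rw [UniqueInNbr] at this
    push_neg at this
    obtain ⟨u, hu1, hu2⟩ := this hE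
    exact ⟨u, (hSmem u j).mpr hu1, hu2⟩
  refine ⟨fun j x => if hj : v₀ ∈ S j then maskF v₀ (hex j hj).choose (S j) x
    else evenF (S j) x, ?_, ?_⟩
  · intro i j
    rw [show DepEdge f i j ↔ i ∈ S j from (hSmem i j).symm]
    show Essential _ i ↔ _
    by_cases hj : v₀ ∈ S j
    · simp only [hj, dif_pos]
      exact essential_maskF v₀ _ (S j) hj (hex j hj).choose_spec.1 (hex j hj).choose_spec.2 i
    · simp only [hj, dif_neg, not_false_iff]
      exact essential_evenF (S j) i
  · intro hobs
    set g : Fin n → (Fin n → Bool) → Bool := fun j x =>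
      if hj : v₀ ∈ S j then maskF v₀ (hex j hj).choose (S j) x else evenF (S j) x with hg
    have hstep : netStep g ones = netStep g (Function.update ones v₀ false) := by
      funext j
      show g j ones = g j (Function.update ones v₀ false)
      rw [hg]
      by_cases hj : v₀ ∈ S j
      · simp only [hj, dif_pos]
        exact maskF_mask v₀ _ (S j) (hex j hj).choose_spec.2
      · simp only [hj, dif_neg, not_false_iff]
        apply evenF_depends
        intro s hs
        rw [Function.update_of_ne (fun hc : s = v₀ => hj (hc ▸ hs))]
    obtain ⟨k, q, hq, hne⟩ := hobs ones (Function.update ones v₀ false)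
      (by
        intro hc
        have := congrFun hc v₀
        rw [Function.update_self] at this
        simp [ones] at this)
    rcases k with _ | k
    · apply hne
      show ones q = Function.update ones v₀ false q
      rw [Function.update_of_ne (fun hc : q = v₀ => hv₀ (hc ▸ hq))]
    · apply hne
      rw [Function.iterate_succ_apply, Function.iterate_succ_apply]
      show (netStep g)^[k] (netStep g ones) q = _
      rw [hstep]

/-- the ¬P2 construction -/
lemma notP2_unobs (f : Fin n → (Fin n → Bool) → Bool) (m : ℕ) (c : Fin (m + 1) → Fin n)
    (hcyc : IsCycle (DepEdge f) c) (hsimple : ∀ j, ¬ ((c j : ℕ) < h))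
    (hno : ∀ v, (∀ j, c j ≠ v) → ∀ j, ¬ UniqueInNbr (DepEdge f) (c j) v) :
    ∃ g : Fin n → (Fin n → Bool) → Bool,
      (∀ i j, DepEdge g i j ↔ DepEdge f i j) ∧ ¬ Observable g h := by
  classical
  set S : Fin n → Finset (Fin n) := fun v => Finset.univ.filter (fun i => DepEdge f i v)
    with hSdef
  have hSmem : ∀ i v, i ∈ S v ↔ DepEdge f i v := by
    intro i v; rw [hSdef, Finset.mem_filter]; simp
  have hpmem : ∀ (v : Fin n) (hv : ∃ j, c j = v), c (hv.choose - 1) ∈ S v := by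
    intro v hv
    rw [hSmem]
    have h1 : DepEdge f (c (hv.choose - 1)) (c (hv.choose - 1 + 1)) := hcyc.2 _
    rwa [sub_add_cancel, hv.choose_spec] at h1
  have hpair : ∀ v : Fin n, (∀ jj, c jj ≠ v) → ∀ jj, c jj ∈ S v →
      ∃ a ∈ S v, ∃ b ∈ S v, a ≠ b := by
    intro v hoff jj hjj
    have hE : DepEdge f (c jj) v := (hSmem _ _).mp hjj
    have h2 := hno v hoff jj
    rw [UniqueInNbr] at h2
    push_neg at h2
    obtain ⟨u, hu1, hu2⟩ := h2 hE
    exact ⟨c jj, hjj, u, (hSmem _ _).mpr hu1, fun hc => hu2 hc.symm⟩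
  refine ⟨fun v x =>
    if hv : ∃ j, c j = v then cycF (c (hv.choose - 1)) (S v) x
    else if hC : ∃ jj, c jj ∈ S v then amoF (S v) x
    else evenF (S v) x, ?_, ?_⟩
  · intro i v
    rw [show DepEdge f i v ↔ i ∈ S v from (hSmem i v).symm]
    show Essential _ i ↔ _
    by_cases hv : ∃ j, c j = v
    · simp only [hv, dif_pos]
      exact essential_cycF _ (S v) (hpmem v hv) i
    · have hoff : ∀ jj, c jj ≠ v := by push_neg at hv; exact hv
      simp only [hv, dif_neg, not_false_iff]
      by_cases hC : ∃ jj, c jj ∈ S v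
      · simp only [hC, dif_pos]
        exact essential_amoF (S v) (hpair v hoff hC.choose hC.choose_spec) i
      · simp only [hC, dif_neg, not_false_iff]
        exact essential_evenF (S v) i
  · intro hobs
    set g : Fin n → (Fin n → Bool) → Bool := fun v x =>
      if hv : ∃ j, c j = v then cycF (c (hv.choose - 1)) (S v) x
      else if hC : ∃ jj, c jj ∈ S v then amoF (S v) x
      else evenF (S v) x with hg
    have hstep_ones : netStep g ones = ones := by
      funext v
      show g v ones = ones v
      rw [hg]
      by_cases hv : ∃ j, c j = v
      · simp only [hv, dif_pos]
        exact cycF_ones _ _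
      · simp only [hv, dif_neg, not_false_iff]
        by_cases hC : ∃ jj, c jj ∈ S v
        · simp only [hC, dif_pos]
          exact amoF_ones _
        · simp only [hC, dif_neg, not_false_iff]
          exact evenF_ones _
    have hstep_upd : ∀ j : Fin (m + 1),
        netStep g (Function.update ones (c j) false)
          = Function.update ones (c (j + 1)) false := by
      intro j
      funext v
      show g v (Function.update ones (c j) false) = Function.update ones (c (j + 1)) false v
      rw [hg]
      by_cases hv : ∃ jj, c jj = v
      · simp only [hv, dif_pos]
        rw [cycF_upd_ones]
        by_cases hcase : hv.choose = j + 1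
        · have hp : hv.choose - 1 = j := by rw [hcase]; exact add_sub_cancel_right _ _
          have hvj : v = c (j + 1) := by rw [← hv.choose_spec, hcase]
          rw [hp, if_pos rfl, hvj, Function.update_self]
        · have hne1 : c j ≠ c (hv.choose - 1) := by
            intro hc
            apply hcase
            have h3 : j = hv.choose - 1 := hcyc.1 hc
            rw [h3, sub_add_cancel]
          have hne2 : v ≠ c (j + 1) := by
            intro hc
            apply hcase
            apply hcyc.1
            rw [hv.choose_spec, hc]
          rw [if_neg hne1, Function.update_of_ne hne2]
          rfl
      · have hoff : ∀ jj, c jj ≠ v := by push_neg at hv; exact hv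
        have hne2 : v ≠ c (j + 1) := fun hc => hoff (j + 1) hc.symm
        rw [Function.update_of_ne hne2]
        simp only [hv, dif_neg, not_false_iff]
        by_cases hC : ∃ jj, c jj ∈ S v
        · simp only [hC, dif_pos]
          exact amoF_upd_ones _ _
        · simp only [hC, dif_neg, not_false_iff]
          push_neg at hC
          rw [show evenF (S v) (Function.update ones (c j) false) = evenF (S v) ones from
            evenF_depends _ _ _ (fun s hs =>
              Function.update_of_ne (fun hc : s = c j => hC j (hc ▸ hs)) _ _), evenF_ones]
          rfl
    have hinv : ∀ k : ℕ, (netStep g)^[k] ones = ones ∧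
        ∃ j : Fin (m + 1), (netStep g)^[k] (Function.update ones (c 0) false)
          = Function.update ones (c j) false := by
      intro k
      induction k with
      | zero => exact ⟨rfl, 0, rfl⟩
      | succ k ih =>
        obtain ⟨ih1, j, ih2⟩ := ih
        refine ⟨?_, j + 1, ?_⟩
        · rw [Function.iterate_succ_apply', ih1, hstep_ones]
        · rw [Function.iterate_succ_apply', ih2, hstep_upd j]
    obtain ⟨k, q, hq, hne⟩ := hobs ones (Function.update ones (c 0) false)
      (by
        intro hc
        have := congrFun hc (c 0)
        rw [Function.update_self] at this
        simp [ones] at this)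
    obtain ⟨h1, j, h2⟩ := hinv k
    apply hne
    rw [h1, h2, Function.update_of_ne (fun hc : q = c j => hsimple j (hc ▸ hq))]

lemma P1_of_SO (_hh1 : 1 ≤ h) (_hhn : h ≤ n) (f : Fin n → (Fin n → Bool) → Bool)
    (hSO : StructurallyObservable f h) :
    SatisfiesP1 (DepEdge f) {i : Fin n | (i : ℕ) < h} := by
  intro v₀ hv₀
  by_contra hno
  push_neg at hno
  obtain ⟨g, hiff, hnobs⟩ := notP1_unobs f v₀ hv₀ hno
  exact hnobs (hSO g hiff)

lemma P2_of_SO (_hh1 : 1 ≤ h) (_hhn : h ≤ n) (f : Fin n → (Fin n → Bool) → Bool)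
    (hSO : StructurallyObservable f h) :
    SatisfiesP2 (DepEdge f) {i : Fin n | (i : ℕ) < h} := by
  intro m c hcyc hsimp
  by_contra hno
  rw [CycleSatisfiesP2] at hno
  push_neg at hno
  obtain ⟨g, hiff, hnobs⟩ := notP2_unobs f m c hcyc hsimp hno
  exact hnobs (hSO g hiff)

end Main

end BNAux

/-- A Boolean network on `n` nodes with `h` outputs is structurally observable
iff its dependency graph, marked at the output indices, satisfies both
Property P1 and Property P2. -/
theorem bn_structurally_observable_iff_P1_P2 {n h : ℕ} (hh1 : 1 ≤ h) (hhn : h ≤ n)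
    (f : Fin n → (Fin n → Bool) → Bool) :
    StructurallyObservable f h ↔
      (SatisfiesP1 (DepEdge f) {i : Fin n | (i : ℕ) < h} ∧
       SatisfiesP2 (DepEdge f) {i : Fin n | (i : ℕ) < h}) := by
  classical
  constructor
  · intro hSO
    constructor
    · exact BNAux.P1_of_SO hh1 hhn f hSO
    · exact BNAux.P2_of_SO hh1 hhn f hSO
  · rintro ⟨h1, h2⟩ g hiff
    have hE : DepEdge g = DepEdge f := funext fun i => funext fun j => propext (hiff i j)
    exact BNAux.observable_of_P1P2 g (hE ▸ h1) (hE ▸ h2)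
end

section
/- Let f be a Boolean network on n nodes with h outputs whose dependency graph is G (marked at the output indices {1,…,h}). Then f is structurally observable if and only if the vertex set of G can be partitioned into vertex-disjoint observed paths. -/
/-- An observed path: an injective directed path whose terminal vertex is the
unique marked vertex on the path, and each vertex is the unique in-neighbor of
its successor on the path. -/
def IsObservedPath {V : Type*} (E : V → V → Prop) (O : Set V) {s : ℕ}
    (p : Fin (s + 1) → V) : Prop :=
  Function.Injective p ∧
  (∀ k : Fin s, UniqueInNbr E (p k.castSucc) (p k.succ)) ∧
  p (Fin.last s) ∈ O ∧
  (∀ k, p k ∈ O → k = Fin.last s)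

/-- The vertex set can be partitioned into vertex-disjoint observed paths. -/
def ObservedPathPartition {V : Type*} (E : V → V → Prop) (O : Set V) : Prop :=
  ∃ (r : ℕ) (ℓ : Fin r → ℕ) (p : (i : Fin r) → Fin (ℓ i + 1) → V),
    (∀ i, IsObservedPath E O (p i)) ∧
    (Pairwise fun i j => Disjoint (Set.range (p i)) (Set.range (p j))) ∧
    (⋃ i, Set.range (p i)) = Set.univ

/-!
Along an edge `u → w` on which `u` is the unique in-neighbor of `w`, the update of `w` is `z u`
or its negation, so a difference between two states at `u` reaches `w` one step later; along an
observed path it reaches the marked end.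

Conversely, if the vertices that have a walk of unique-in-neighbor edges to a marked vertex are
not all of `V`, the remaining ones contain a hidden set `U`: either a single vertex without
unique-in-neighbor out-edges, or the whole remainder, on which these edges then form a
permutation. In the network where every node computes the AND of its in-neighbors, a state that
is `true` at a single vertex of `U` stays such a state, so it is never told apart from the
all-`false` state. If every vertex has such a walk, following shortest walks gives a successor
map whose orbits, started at the vertices without predecessor, form the partition.
-/

section Network

variable {n : ℕ}

theorem dependsOn_setOf_essential {α : Type*} (g : (Fin n → α) → α) :
    DependsOn g {i | Essential g i} := by
  classical
  intro x y hxy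
  suffices ∀ s : Finset (Fin n), (∀ i ∈ s, ¬ Essential g i) →
      ∀ x, (∀ i ∉ s, x i = y i) → g x = g y from
    this (Finset.univ.filter fun i => ¬ Essential g i) (by simp) x
      fun i hi => hxy i (by simpa using hi)
  intro s
  induction s using Finset.induction_on with
  | empty => exact fun _ x hx => congrArg g (funext fun i => hx i (Finset.notMem_empty i))
  | insert a s _ ih =>
    intro hs x hx
    have hstep : g x = g (Function.update x a (y a)) := by
      by_contra hne
      exact hs a (Finset.mem_insert_self a s)
        ⟨x, _, fun i hia => (Function.update_of_ne hia ..).symm, hne⟩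
    refine hstep.trans (ih (fun i hi => hs i (Finset.mem_insert_of_mem hi)) _ fun i hi => ?_)
    rcases eq_or_ne i a with rfl | hia
    · exact Function.update_self ..
    · rw [Function.update_of_ne hia]
      exact hx i (by simp [hia, hi])

theorem not_essential_of_dependsOn {α : Type*} {g : (Fin n → α) → α} {s : Set (Fin n)}
    (hg : DependsOn g s) {i : Fin n} (hi : i ∉ s) : ¬ Essential g i := by
  rintro ⟨x, y, hxy, hne⟩
  exact hne (hg fun j hj => hxy j (ne_of_mem_of_not_mem hj hi))

theorem apply_ne_apply_of_uniqueInNbr {g : Fin n → (Fin n → Bool) → Bool} {u w : Fin n}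
    (hu : UniqueInNbr (DepEdge g) u w) {x y : Fin n → Bool} (hxy : x u ≠ y u) :
    g w x ≠ g w y := by
  have hconst : ∀ z, g w z = g w fun _ => z u :=
    fun z => dependsOn_setOf_essential (g w) fun i hi => by rw [hu.2 i hi]
  obtain ⟨a, b, -, hab⟩ := hu.1
  have hinj : Function.Injective fun c : Bool => g w fun _ => c := by
    rw [Bool.injective_iff]
    intro heq
    apply hab
    rw [hconst a, hconst b]
    cases a u <;> cases b u <;> simp_all
  rw [hconst x, hconst y]
  exact hinj.ne hxy

theorem exists_iterate_ne_of_isObservedPath {g : Fin n → (Fin n → Bool) → Bool}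
    {O : Set (Fin n)} {s : ℕ} {p : Fin (s + 1) → Fin n} (hp : IsObservedPath (DepEdge g) O p)
    (k : Fin (s + 1)) {x y : Fin n → Bool} (hxy : x (p k) ≠ y (p k)) :
    ∃ t, (netStep g)^[t] x (p (Fin.last s)) ≠ (netStep g)^[t] y (p (Fin.last s)) := by
  induction k using Fin.reverseInduction generalizing x y with
  | last => exact ⟨0, hxy⟩
  | cast k ih =>
    obtain ⟨t, ht⟩ := ih (x := netStep g x) (y := netStep g y)
      (apply_ne_apply_of_uniqueInNbr (hp.2.1 k) hxy)
    exact ⟨t + 1, by simpa only [Function.iterate_succ_apply] using ht⟩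

theorem observable_of_observedPathPartition {g : Fin n → (Fin n → Bool) → Bool} {h : ℕ}
    (hpart : ObservedPathPartition (DepEdge g) {i : Fin n | (i : ℕ) < h}) :
    Observable g h := by
  obtain ⟨r, ℓ, p, hp, -, hcover⟩ := hpart
  intro x y hxy
  obtain ⟨v, hv⟩ := Function.ne_iff.mp hxy
  obtain ⟨i, k, rfl⟩ := Set.mem_iUnion.mp (hcover ▸ Set.mem_univ v)
  obtain ⟨t, ht⟩ := exists_iterate_ne_of_isObservedPath (hp i) k hv
  exact ⟨t, _, (hp i).2.2.1, ht⟩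

end Network

section Graph

variable {V : Type*} {E : V → V → Prop} {O : Set V}

theorem ObservedPathPartition.of_finite {ι : Type*} [Finite ι] {ℓ : ι → ℕ}
    {p : (i : ι) → Fin (ℓ i + 1) → V} (hp : ∀ i, IsObservedPath E O (p i))
    (hdisj : Pairwise fun i j => Disjoint (Set.range (p i)) (Set.range (p j)))
    (hcover : ⋃ i, Set.range (p i) = Set.univ) : ObservedPathPartition E O := by
  obtain ⟨r, ⟨e⟩⟩ := Finite.exists_equiv_fin ι
  exact ⟨r, ℓ ∘ e.symm, fun i => p (e.symm i), fun i => hp _,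
    fun i j hij => hdisj (e.symm.injective.ne hij),
    by rw [← hcover]; exact e.symm.surjective.iUnion_comp fun i => Set.range (p i)⟩

theorem eq_of_iterate_eq_of_injOn {f : V → V} {s : Set V} (hf : Set.InjOn f s) {a : ℕ}
    {x y : V} (hx : ∀ i < a, f^[i] x ∈ s) (hy : ∀ i < a, f^[i] y ∈ s)
    (hxy : f^[a] x = f^[a] y) : x = y := by
  induction a generalizing x y with
  | zero => exact hxy
  | succ a ih =>
    rw [Function.iterate_succ_apply, Function.iterate_succ_apply] at hxy
    refine hf (hx 0 a.succ_pos) (hy 0 a.succ_pos) (ih (fun i hi => ?_) (fun i hi => ?_) hxy)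
    · rw [← Function.iterate_succ_apply]; exact hx (i + 1) (by omega)
    · rw [← Function.iterate_succ_apply]; exact hy (i + 1) (by omega)

section Successor

variable {σ : V → V} (hreach : ∀ v, ∃ k, σ^[k] v ∈ O)

theorem injOn_of_uniqueInNbr (hσ : ∀ v ∉ O, UniqueInNbr E v (σ v)) : Set.InjOn σ Oᶜ :=
  fun v hv w hw hvw => (hσ w hw).2 v (hvw ▸ (hσ v hv).1)

open Classical

noncomputable def hittingTime (v : V) : ℕ := Nat.find (hreach v)

theorem iterate_hittingTime_mem (v : V) : σ^[hittingTime hreach v] v ∈ O :=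
  Nat.find_spec (hreach v)

theorem iterate_notMem_of_lt_hittingTime {v : V} {i : ℕ} (hi : i < hittingTime hreach v) :
    σ^[i] v ∉ O :=
  Nat.find_min (hreach v) hi

theorem hittingTime_eq_succ {v : V} (hv : v ∉ O) :
    hittingTime hreach v = hittingTime hreach (σ v) + 1 :=
  Nat.find_comp_succ _ _ hv

def IsPathStart (σ : V → V) (O : Set V) (s : V) : Prop := ∀ u ∉ O, σ u ≠ s

theorem eq_of_iterate_eq_of_isPathStart (hσ : ∀ v ∉ O, UniqueInNbr E v (σ v)) {s t : V}
    (hs : IsPathStart σ O s) (ht : IsPathStart σ O t) {a b : ℕ}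
    (ha : a ≤ hittingTime hreach s) (hb : b ≤ hittingTime hreach t)
    (hab : σ^[a] s = σ^[b] t) : s = t ∧ a = b := by
  wlog hle : a ≤ b generalizing s t a b
  · obtain ⟨h1, h2⟩ := this ht hs hb ha hab.symm (by omega)
    exact ⟨h1.symm, h2.symm⟩
  obtain ⟨c, rfl⟩ := Nat.exists_eq_add_of_le hle
  have hs_eq : s = σ^[c] t := by
    refine eq_of_iterate_eq_of_injOn (injOn_of_uniqueInNbr hσ) (a := a)
      (fun i hi => iterate_notMem_of_lt_hittingTime hreach (by omega))
      (fun i hi => ?_) (by rwa [← Function.iterate_add_apply])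
    rw [← Function.iterate_add_apply]
    exact iterate_notMem_of_lt_hittingTime hreach (by omega)
  cases c with
  | zero => exact ⟨hs_eq, rfl⟩
  | succ c =>
    rw [Function.iterate_succ_apply'] at hs_eq
    exact absurd hs_eq.symm (hs _ (iterate_notMem_of_lt_hittingTime hreach (by omega)))

theorem isObservedPath_iterate (hσ : ∀ v ∉ O, UniqueInNbr E v (σ v)) {s : V}
    (hs : IsPathStart σ O s) :
    IsObservedPath E O fun k : Fin (hittingTime hreach s + 1) => σ^[k] s := by
  refine ⟨fun a b hab => Fin.ext ?_, fun k => ?_, iterate_hittingTime_mem hreach s,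
    fun k hk => Fin.ext ?_⟩
  · exact (eq_of_iterate_eq_of_isPathStart hreach hσ hs hs (by omega) (by omega) hab).2
  · simpa only [Fin.val_castSucc, Fin.val_succ, Function.iterate_succ_apply'] using
      hσ _ (iterate_notMem_of_lt_hittingTime hreach k.isLt)
  · by_contra hne
    exact iterate_notMem_of_lt_hittingTime hreach (by simp at hne ⊢; omega) hk

theorem exists_isPathStart_iterate_eq [Finite V] (v : V) :
    ∃ s, IsPathStart σ O s ∧ ∃ k ≤ hittingTime hreach s, σ^[k] s = v := by
  obtain ⟨s, ⟨k, hk, rfl⟩, hmax⟩ := Set.exists_max_image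
    {u | ∃ k ≤ hittingTime hreach u, σ^[k] u = v} (hittingTime hreach) (Set.toFinite _)
    ⟨v, 0, Nat.zero_le _, rfl⟩
  refine ⟨s, fun u hu hus => ?_, k, hk, rfl⟩
  have hlt : hittingTime hreach u ≤ hittingTime hreach s :=
    hmax u ⟨k + 1, by rw [hittingTime_eq_succ hreach hu, hus]; omega,
      by rw [Function.iterate_succ_apply, hus]⟩
  rw [hittingTime_eq_succ hreach hu, hus] at hlt
  omega

end Successor

theorem observedPathPartition_of_iterate_mem [Finite V] {σ : V → V}
    (hσ : ∀ v ∉ O, UniqueInNbr E v (σ v)) (hreach : ∀ v, ∃ k, σ^[k] v ∈ O) :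
    ObservedPathPartition E O := by
  refine ObservedPathPartition.of_finite (ι := {s // IsPathStart σ O s})
    (fun s => isObservedPath_iterate hreach hσ s.2) (fun s t hst => ?_) ?_
  · refine Set.disjoint_left.mpr ?_
    rintro _ ⟨a, rfl⟩ ⟨b, hab⟩
    exact hst (Subtype.ext (eq_of_iterate_eq_of_isPathStart hreach hσ s.2 t.2
      (by omega) (by omega) hab.symm).1)
  · refine Set.eq_univ_of_forall fun v => ?_
    obtain ⟨s, hs, k, hk, rfl⟩ := exists_isPathStart_iterate_eq hreach v
    exact Set.mem_iUnion.mpr ⟨⟨s, hs⟩, ⟨k, Nat.lt_succ_of_le hk⟩, rfl⟩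

/-- A signal placed on one vertex of `U` travels inside `U` along unique-in-neighbor edges and is
never observed. -/
structure IsHiddenSet (E : V → V → Prop) (O U : Set V) : Prop where
  nonempty : U.Nonempty
  disjoint : Disjoint U O
  mapsTo : ∀ ⦃u w⦄, u ∈ U → UniqueInNbr E u w → w ∈ U
  subsingleton : ∀ ⦃u⦄, u ∈ U → {w | UniqueInNbr E u w}.Subsingleton

theorem exists_isHiddenSet [Finite V] {U : Set V} (hne : U.Nonempty) (hdisj : Disjoint U O)
    (hmaps : ∀ ⦃u w⦄, u ∈ U → UniqueInNbr E u w → w ∈ U) :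
    ∃ U', IsHiddenSet E O U' := by
  by_cases hleaf : ∃ u ∈ U, ∀ w, ¬ UniqueInNbr E u w
  · obtain ⟨u, hu, hleaf⟩ := hleaf
    refine ⟨{u}, Set.singleton_nonempty u, Set.disjoint_singleton_left.mpr
      (Set.disjoint_left.mp hdisj hu), ?_, ?_⟩
    · rintro _ w rfl huw
      exact absurd huw (hleaf w)
    · rintro _ rfl w huw
      exact absurd huw (hleaf w)
  push Not at hleaf
  choose τ hτ using fun u : U => hleaf u u.2
  let τU : U → U := fun u => ⟨τ u, hmaps u.2 (hτ u)⟩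
  have hinj : τU.Injective := fun u u' huu' => by
    have hττ : τ u = τ u' := congrArg Subtype.val huu'
    exact Subtype.ext ((hτ u').2 u (hττ ▸ (hτ u).1))
  -- `τU` is a bijection of the finite set `U`, so each `w ∈ U` already has its unique
  -- in-neighbor inside `U`, namely `τU⁻¹ w`
  have hsurj := Finite.injective_iff_surjective.mp hinj
  have hchild : ∀ (u : U) w, UniqueInNbr E u w → w = τ u := by
    intro u w huw
    obtain ⟨u', hu'⟩ := hsurj ⟨w, hmaps u.2 huw⟩
    have hw : τ u' = w := congrArg Subtype.val hu'
    obtain rfl : u' = u := Subtype.ext (huw.2 u' (hw ▸ (hτ u').1))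
    exact hw.symm
  exact ⟨U, ⟨hne, hdisj, hmaps, fun u hu w huw w' huw' =>
    (hchild ⟨u, hu⟩ w huw).trans (hchild ⟨u, hu⟩ w' huw').symm⟩⟩

def reachesIn (E : V → V → Prop) (O : Set V) : ℕ → Set V
  | 0 => O
  | k + 1 => {v | ∃ w ∈ reachesIn E O k, UniqueInNbr E v w}

open Classical in
theorem exists_successor_of_reachesIn (hreach : ∀ v, ∃ k, v ∈ reachesIn E O k) :
    ∃ σ : V → V, (∀ v ∉ O, UniqueInNbr E v (σ v)) ∧ ∀ v, ∃ k, σ^[k] v ∈ O := by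
  let rank v := Nat.find (hreach v)
  have hdesc : ∀ v ∉ O, ∃ w, UniqueInNbr E v w ∧ rank w < rank v := by
    intro v hv
    have hspec : v ∈ reachesIn E O (rank v) := Nat.find_spec (hreach v)
    cases hk : rank v with
    | zero => rw [hk] at hspec; exact absurd hspec hv
    | succ k =>
      rw [hk] at hspec
      obtain ⟨w, hw, hvw⟩ := hspec
      exact ⟨w, hvw, Nat.lt_succ_of_le (Nat.find_min' (hreach w) hw)⟩
  choose! σ hσ hlt using hdesc
  refine ⟨σ, hσ, fun v => ?_⟩
  induction v using (measure rank).wf.induction with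
  | _ v ih =>
    by_cases hv : v ∈ O
    · exact ⟨0, hv⟩
    · obtain ⟨k, hk⟩ := ih (σ v) (hlt v hv)
      exact ⟨k + 1, by rwa [Function.iterate_succ_apply]⟩

theorem observedPathPartition_of_forall_not_isHiddenSet [Finite V]
    (h : ∀ U, ¬ IsHiddenSet E O U) : ObservedPathPartition E O := by
  suffices hreach : ∀ v, ∃ k, v ∈ reachesIn E O k by
    obtain ⟨σ, hσ, hσreach⟩ := exists_successor_of_reachesIn hreach
    exact observedPathPartition_of_iterate_mem hσ hσreach
  by_contra! ⟨v, hv⟩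
  obtain ⟨U, hU⟩ := exists_isHiddenSet (O := O) (U := {v | ∀ k, v ∉ reachesIn E O k})
    ⟨v, hv⟩ (Set.disjoint_left.mpr fun u hu => hu 0)
    (fun u w hu huw k hw => hu (k + 1) ⟨w, hw, huw⟩)
  exact h U hU

end Graph

section AndNetwork

variable {n : ℕ}

open Classical in
/-- The empty conjunction is `false`, so that nodes without in-neighbors never switch on. -/
noncomputable def andOn (S : Set (Fin n)) (z : Fin n → Bool) : Bool :=
  decide (S.Nonempty ∧ ∀ i ∈ S, z i = true)

theorem andOn_eq_true {S : Set (Fin n)} {z : Fin n → Bool} :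
    andOn S z = true ↔ S.Nonempty ∧ ∀ i ∈ S, z i = true := by
  simp [andOn]

theorem dependsOn_andOn (S : Set (Fin n)) : DependsOn (andOn S) S := fun x y hxy => by
  rw [Bool.eq_iff_iff, andOn_eq_true, andOn_eq_true]
  exact and_congr_right fun _ => forall₂_congr fun i hi => by rw [hxy i hi]

theorem essential_andOn {S : Set (Fin n)} {i : Fin n} : Essential (andOn S) i ↔ i ∈ S := by
  refine ⟨fun hi => ?_, fun hi => ?_⟩
  · by_contra hiS
    exact not_essential_of_dependsOn (dependsOn_andOn S) hiS hi
  · refine ⟨fun _ => true, Function.update (fun _ => true) i false,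
      fun k hk => (Function.update_of_ne hk false fun _ => true).symm, ?_⟩
    have htrue : andOn S (fun _ => true) = true :=
      andOn_eq_true.mpr ⟨⟨i, hi⟩, fun _ _ => rfl⟩
    have hfalse : andOn S (Function.update (fun _ => true) i false) = false := by
      rw [← Bool.not_eq_true, andOn_eq_true]
      exact fun h => by simpa using h.2 i hi
    rw [htrue, hfalse]
    decide

noncomputable def andNet (f : Fin n → (Fin n → Bool) → Bool) :
    Fin n → (Fin n → Bool) → Bool :=
  fun j => andOn {i | Essential (f j) i}

theorem depEdge_andNet (f : Fin n → (Fin n → Bool) → Bool) : DepEdge (andNet f) = DepEdge f :=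
  funext₂ fun _ _ => propext essential_andOn

end AndNetwork

section Counterexample

variable {n : ℕ} {f : Fin n → (Fin n → Bool) → Bool}

def singleSignalStates (U : Set (Fin n)) : Set (Fin n → Bool) :=
  {z | {w | z w = true} ⊆ U ∧ {w | z w = true}.Subsingleton}

theorem exists_uniqueInNbr_of_netStep_andNet {z : Fin n → Bool}
    (hz : {w | z w = true}.Subsingleton) {w : Fin n} (hw : netStep (andNet f) z w = true) :
    ∃ u, z u = true ∧ UniqueInNbr (DepEdge f) u w := by
  obtain ⟨⟨u, hu⟩, hall⟩ := andOn_eq_true.mp hw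
  exact ⟨u, hall u hu, hu, fun u' hu' => hz (hall u' hu') (hall u hu)⟩

theorem mapsTo_netStep_andNet {O U : Set (Fin n)} (hU : IsHiddenSet (DepEdge f) O U) :
    Set.MapsTo (netStep (andNet f)) (singleSignalStates U) (singleSignalStates U) := by
  rintro z ⟨hzU, hz⟩
  refine ⟨fun w hw => ?_, fun w hw w' hw' => ?_⟩
  · obtain ⟨u, hu, huw⟩ := exists_uniqueInNbr_of_netStep_andNet hz hw
    exact hU.mapsTo (hzU hu) huw
  · obtain ⟨u, hu, huw⟩ := exists_uniqueInNbr_of_netStep_andNet hz hw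
    obtain ⟨u', hu', huw'⟩ := exists_uniqueInNbr_of_netStep_andNet hz hw'
    obtain rfl := hz hu' hu
    exact hU.subsingleton (hzU hu) huw huw'

theorem not_observable_andNet {h : ℕ} {U : Set (Fin n)}
    (hU : IsHiddenSet (DepEdge f) {i : Fin n | (i : ℕ) < h} U) : ¬ Observable (andNet f) h := by
  obtain ⟨u, hu⟩ := hU.nonempty
  have hzero : (fun _ => false) ∈ singleSignalStates U := by
    simp [singleSignalStates]
  have hsingle : (fun w => decide (w = u)) ∈ singleSignalStates U := by
    simp [singleSignalStates, hu]
  have hsilent : ∀ z ∈ singleSignalStates U, ∀ q : Fin n, (q : ℕ) < h → z q = false :=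
    fun z hz q hq => Bool.not_eq_true _ ▸ fun hzq =>
      Set.disjoint_left.mp hU.disjoint (hz.1 hzq) hq
  intro hobs
  obtain ⟨t, q, hq, hne⟩ := hobs (fun _ => false) (fun w => decide (w = u))
    (Function.ne_iff.mpr ⟨u, by simp⟩)
  have hmaps := (mapsTo_netStep_andNet hU).iterate t
  exact hne ((hsilent _ (hmaps hzero) q hq).trans (hsilent _ (hmaps hsingle) q hq).symm)

end Counterexample

theorem bn_structurally_observable_iff_observed_path_partition_general {n h : ℕ}
    (f : Fin n → (Fin n → Bool) → Bool) :
    StructurallyObservable f h ↔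
      ObservedPathPartition (DepEdge f) {i : Fin n | (i : ℕ) < h} := by
  refine ⟨fun hSO => ?_, fun hpart g hg => ?_⟩
  · refine observedPathPartition_of_forall_not_isHiddenSet fun U hU => ?_
    exact not_observable_andNet hU (hSO _ fun i j => by rw [depEdge_andNet])
  · have hedges : DepEdge g = DepEdge f := funext₂ fun i j => propext (hg i j)
    exact observable_of_observedPathPartition (hedges ▸ hpart)

/-- A Boolean network on `n` nodes with `h` outputs is structurally observable
iff the vertex set of its dependency graph can be partitioned into
vertex-disjoint observed paths. -/
theorem bn_structurally_observable_iff_observed_path_partition {n h : ℕ}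
    (hh1 : 1 ≤ h) (hhn : h ≤ n) (f : Fin n → (Fin n → Bool) → Bool) :
    StructurallyObservable f h ↔
      ObservedPathPartition (DepEdge f) {i : Fin n | (i : ℕ) < h} :=
  bn_structurally_observable_iff_observed_path_partition_general f
end

section
/- Every Boolean network on n nodes with h outputs whose dependency graph, marked at the output indices {1,…,h}, satisfies both Property P1 and Property P2 is observable. -/
private lemma dep_only {n : ℕ} {g : (Fin n → Bool) → Bool} {v : Fin n}
    (hv : ∀ i, i ≠ v → ¬ Essential g i) (y : Fin n → Bool) :
    ∀ (s : Finset (Fin n)), v ∉ s → ∀ x : Fin n → Bool,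
      (∀ k, k ∉ s → x k = y k) → g x = g y := by
  classical
  intro s
  induction s using Finset.induction_on with
  | empty =>
    intro _ x hx
    congr 1
    funext k
    exact hx k (by simp)
  | @insert i s hi ih =>
    intro hvs x hx
    have hiv : i ≠ v := by
      intro hh; exact hvs (by simp [hh])
    have hvs' : v ∉ s := fun hh => hvs (Finset.mem_insert_of_mem hh)
    set x' := Function.update x i (y i) with hx'
    have h1 : g x = g x' := by
      by_contra hne
      exact hv i hiv ⟨x, x', fun k hk => (Function.update_of_ne hk _ _).symm, hne⟩
    rw [h1]
    apply ih hvs' x'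
    intro k hk
    by_cases hki : k = i
    · subst hki; simp [hx']
    · rw [hx', Function.update_of_ne hki]
      exact hx k (by simp [hki, hk])

private lemma uin_ne {n : ℕ} (f : Fin n → (Fin n → Bool) → Bool) {v w : Fin n}
    (huin : UniqueInNbr (DepEdge f) v w) (x y : Fin n → Bool) (hne : x v ≠ y v) :
    f w x ≠ f w y := by
  classical
  have honly : ∀ i, i ≠ v → ¬ Essential (f w) i := fun i hi he => hi (huin.2 i he)
  have hagree : ∀ a b : Fin n → Bool, a v = b v → f w a = f w b := by
    intro a b hab
    apply dep_only honly b (Finset.univ.erase v) (by simp) a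
    intro k hk
    have hkv : k = v := by simpa using hk
    subst hkv; exact hab
  obtain ⟨a, b, hab, hgab⟩ := huin.1
  have havbv : a v ≠ b v := by
    intro hh
    apply hgab; congr 1; funext k
    by_cases hk : k = v
    · subst hk; exact hh
    · exact hab k hk
  have hbool : ∀ p q r s : Bool, p ≠ q → r ≠ s → (p = r ∧ q = s) ∨ (p = s ∧ q = r) := by decide
  rcases hbool (x v) (y v) (a v) (b v) hne havbv with ⟨h1, h2⟩ | ⟨h1, h2⟩
  · rw [hagree x a h1, hagree y b h2]; exact hgab
  · rw [hagree x b h1, hagree y a h2]; exact fun hh => hgab hh.symm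

/-- Every Boolean network whose dependency graph (marked at the output indices)
satisfies both Property P1 and Property P2 is observable. -/
theorem bn_observable_of_P1_P2 {n h : ℕ} (hh1 : 1 ≤ h) (hhn : h ≤ n)
    (f : Fin n → (Fin n → Bool) → Bool)
    (hP1 : SatisfiesP1 (DepEdge f) {i : Fin n | (i : ℕ) < h})
    (hP2 : SatisfiesP2 (DepEdge f) {i : Fin n | (i : ℕ) < h}) :
    Observable f h := by
  classical
  intro x y hxy
  by_contra hcon
  push_neg at hcon
  -- T : set of coordinates disagreeing at some time
  set T : Set (Fin n) := {v | ∃ k, (netStep f)^[k] x v ≠ (netStep f)^[k] y v} with hTdef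
  obtain ⟨v0, hv0⟩ := Function.ne_iff.mp hxy
  have hv0T : v0 ∈ T := ⟨0, hv0⟩
  have hmark : ∀ v : Fin n, v ∈ T → ¬ ((v : ℕ) < h) := by
    rintro v ⟨k, hk⟩ hvh
    exact hk (hcon k v hvh)
  have hclos : ∀ v, v ∈ T → ∀ w, UniqueInNbr (DepEdge f) v w → w ∈ T := by
    rintro v ⟨k, hk⟩ w huin
    refine ⟨k + 1, ?_⟩
    rw [Function.iterate_succ_apply', Function.iterate_succ_apply']
    exact uin_ne f huin _ _ hk
  -- choose successor function on T
  have hs : ∀ v : T, ∃ w : T, UniqueInNbr (DepEdge f) (v : Fin n) (w : Fin n) := by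
    rintro ⟨v, hv⟩
    obtain ⟨w, hw⟩ := hP1 v (hmark v hv)
    exact ⟨⟨w, hclos v hv w hw⟩, hw⟩
  choose s hsspec using hs
  have hsinj : Function.Injective s := by
    intro a b hab
    have h1 := hsspec a
    have h2 := hsspec b
    rw [hab] at h1
    exact Subtype.ext (h2.2 _ h1.1)
  have hsbij : Function.Bijective s := Finite.injective_iff_bijective.mp hsinj
  -- find a periodic point
  set t0 : T := ⟨v0, hv0T⟩ with ht0
  have hret : ∀ i j : ℕ, i < j → s^[i] t0 = s^[j] t0 → s^[j - i] t0 = t0 := by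
    intro i j hij heq
    have h1 : s^[i] (s^[j - i] t0) = s^[i] t0 := by
      rw [← Function.iterate_add_apply]
      have : i + (j - i) = j := by omega
      rw [this, heq]
    exact (hsinj.iterate i) h1
  have hex : ∃ p, 0 < p ∧ s^[p] t0 = t0 := by
    obtain ⟨i, j, hij, heq⟩ := Finite.exists_ne_map_eq_of_infinite (fun i : ℕ => s^[i] t0)
    rcases Nat.lt_or_ge i j with hlt | hge
    · exact ⟨j - i, by omega, hret i j hlt heq⟩
    · have hlt : j < i := by omega
      exact ⟨i - j, by omega, hret j i hlt heq.symm⟩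
  set p := Nat.find hex with hpdef
  obtain ⟨hppos, hpfix⟩ := Nat.find_spec hex
  set m := p - 1 with hmdef
  have hmp : m + 1 = p := by omega
  set c : Fin (m + 1) → Fin n := fun j => ((s^[(j : ℕ)] t0 : T) : Fin n) with hcdef
  have hcmem : ∀ j : Fin (m + 1), c j ∈ T := fun j => (s^[(j : ℕ)] t0).2
  have cinj : Function.Injective c := by
    have key : ∀ a b : Fin (m + 1), (a : ℕ) < (b : ℕ) → c a ≠ c b := by
      intro a b hab hc
      have heq : s^[(a : ℕ)] t0 = s^[(b : ℕ)] t0 := Subtype.coe_injective hc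
      have hfix := hret a b hab heq
      have hblt : (b : ℕ) - (a : ℕ) < p := by
        have := b.isLt; omega
      exact Nat.find_min hex hblt ⟨by omega, hfix⟩
    intro a b hab
    rcases Nat.lt_trichotomy (a : ℕ) (b : ℕ) with hlt | heq | hgt
    · exact absurd hab (key a b hlt)
    · exact Fin.ext heq
    · exact absurd hab.symm (key b a hgt)
  have hstep : ∀ j : Fin (m + 1), s^[((j + 1 : Fin (m + 1)) : ℕ)] t0 = s (s^[(j : ℕ)] t0) := by
    intro j
    rw [← Function.iterate_succ_apply' s (j : ℕ) t0]
    by_cases hj : j = Fin.last m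
    · subst hj
      have h0 : ((Fin.last m + 1 : Fin (m + 1)) : ℕ) = 0 := by
        simp [Fin.last_add_one]
      have h2 : (Fin.last m : ℕ) + 1 = p := by simp [Fin.val_last]; omega
      rw [h0]
      show s^[0] t0 = s^[(Fin.last m : ℕ) + 1] t0
      rw [h2, hpfix]
      rfl
    · have h1 : ((j + 1 : Fin (m + 1)) : ℕ) = (j : ℕ) + 1 := by
        rw [Fin.val_add_one]
        simp [hj]
      rw [h1]
  have hedge : ∀ j : Fin (m + 1), UniqueInNbr (DepEdge f) (c j) (c (j + 1)) := by
    intro j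
    show UniqueInNbr (DepEdge f) ((s^[(j : ℕ)] t0 : T) : Fin n)
      ((s^[((j + 1 : Fin (m + 1)) : ℕ)] t0 : T) : Fin n)
    rw [hstep j]
    exact hsspec _
  have hcyc : IsCycle (DepEdge f) c := ⟨cinj, fun j => (hedge j).1⟩
  have hsimple : ∀ j : Fin (m + 1), c j ∉ {i : Fin n | (i : ℕ) < h} :=
    fun j hj => hmark (c j) (hcmem j) hj
  obtain ⟨v, hvC, j, hj⟩ := hP2 m c hcyc hsimple
  have hvT : v ∈ T := hclos (c j) (hcmem j) v hj
  obtain ⟨t, ht⟩ := hsbij.2 ⟨v, hvT⟩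
  have h1 := hsspec t
  rw [ht] at h1
  have htc : (t : Fin n) = c j := hj.2 (t : Fin n) h1.1
  have ht' : t = s^[(j : ℕ)] t0 := Subtype.ext htc
  apply hvC (j + 1)
  show ((s^[((j + 1 : Fin (m + 1)) : ℕ)] t0 : T) : Fin n) = v
  rw [hstep j, ← ht', ht]
end

section
/- A marked digraph G satisfies both Property P1 and Property P2 if and only if its vertex set can be partitioned into vertex-disjoint observed paths. -/
/-!
Call `σ : V → V` a successor map if every simple vertex `v` is the unique in-neighbour of `σ v`;
P1 says exactly that one exists, and uniqueness of in-neighbours makes `σ` injective on simple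
vertices.

An observed-path partition yields a successor map (step along the path) that strictly increases
the position on the path. Such a map cannot run around a simple cycle, which is what a cycle
violating P2 would force, since the successor of a cycle vertex has it as unique in-neighbour.

Conversely, given P1 and P2, take a successor map with the fewest vertices whose orbit never meets
`O`. Such a vertex is periodic, hence lies on a simple cycle; redirecting one cycle vertex to the
exit that P2 provides makes it observed and adds no unobserved vertex, because no simple vertex
off the cycle maps into it. So some successor map observes every vertex, and the observed paths
start at the vertices with no simple preimage and follow `σ` up to the first marked vertex.
-/

open Function Set

section Iterates

variable {α : Type*} {f : α → α}

theorem Set.InjOn.eq_of_iterate_eq {s : Set α} (hf : InjOn f s) {x y : α} {n : ℕ}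
    (hx : ∀ k < n, f^[k] x ∈ s) (hy : ∀ k < n, f^[k] y ∈ s) (hxy : f^[n] x = f^[n] y) :
    x = y := by
  induction n with
  | zero => exact hxy
  | succ n ih =>
    rw [iterate_succ_apply', iterate_succ_apply'] at hxy
    exact ih (fun k hk => hx k (by omega)) (fun k hk => hy k (by omega))
      (hf (hx n n.lt_succ_self) (hy n n.lt_succ_self) hxy)

theorem iterate_notMem_of_inter_preimage_subset {s C : Set α} (hC : s ∩ f ⁻¹' C ⊆ C) {x : α}
    (hx : x ∉ C) {n : ℕ} (hs : ∀ k < n, f^[k] x ∈ s) : f^[n] x ∉ C := by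
  induction n with
  | zero => exact hx
  | succ n ih =>
    rw [iterate_succ_apply']
    exact fun h => ih (fun k hk => hs k (by omega)) (hC ⟨hs n n.lt_succ_self, h⟩)

theorem iterate_update_of_forall_ne [DecidableEq α] {a b x : α}
    (h : ∀ k, (update f a b)^[k] x ≠ a) (n : ℕ) : (update f a b)^[n] x = f^[n] x := by
  induction n with
  | zero => rfl
  | succ n ih => rw [iterate_succ_apply', iterate_succ_apply', update_of_ne (h n), ih]

theorem Function.IsPeriodicPt.exists_injective_cycle {x : α} {n : ℕ} (hx : IsPeriodicPt f n x)
    (hn : 0 < n) : ∃ (m : ℕ) (c : Fin (m + 1) → α), (∀ j, c j = f^[j] x) ∧ Injective c ∧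
      ∀ j, f (c j) = c (j + 1) := by
  obtain ⟨m, hm⟩ : ∃ m, minimalPeriod f x = m + 1 :=
    Nat.exists_eq_add_one.mpr (hx.minimalPeriod_pos hn)
  refine ⟨m, fun j => f^[j] x, fun j => rfl, fun i j hij => ?_, fun j => ?_⟩
  · exact Fin.ext (iterate_injOn_Iio_minimalPeriod (by simp [hm, i.is_lt])
      (by simp [hm, j.is_lt]) hij)
  · simp only [Fin.val_add, Fin.val_one', ← hm, Nat.add_mod_mod, iterate_mod_minimalPeriod_eq]
    exact (iterate_succ_apply' f j x).symm

theorem Set.subset_and_mapsTo_of_subset_image_inter [Finite α] {s t : Set α}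
    (h : s ⊆ f '' (s ∩ t)) : s ⊆ t ∧ MapsTo f s s := by
  have hst : s ∩ t = s := Set.eq_of_subset_of_ncard_le inter_subset_left
    ((Set.ncard_le_ncard h).trans (Set.ncard_image_le (Set.toFinite _)))
  rw [hst] at h
  refine ⟨hst ▸ inter_subset_right, fun x hx => ?_⟩
  have := Set.eq_of_subset_of_ncard_le h (Set.ncard_image_le (Set.toFinite _))
  exact this ▸ mem_image_of_mem f hx

end Iterates

theorem Fin.exists_apply_add_one_le {β : Type*} [LinearOrder β] {m : ℕ}
    (f : Fin (m + 1) → β) : ∃ j, f (j + 1) ≤ f j := by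
  obtain ⟨j, hj⟩ := Finite.exists_max f
  exact ⟨j, hj (j + 1)⟩

theorem eq_and_val_eq_of_pairwise_disjoint_range {α : Type*} {r : ℕ} {ℓ : Fin r → ℕ}
    {p : ∀ i, Fin (ℓ i + 1) → α} (hinj : ∀ i, Injective (p i))
    (hdisj : Pairwise fun i j => Disjoint (range (p i)) (range (p j))) {a b : Fin r}
    {x : Fin (ℓ a + 1)} {y : Fin (ℓ b + 1)} (hxy : p a x = p b y) : a = b ∧ (x : ℕ) = y := by
  obtain rfl : a = b := by
    by_contra hab
    exact Set.disjoint_left.mp (hdisj hab) ⟨x, rfl⟩ ⟨y, hxy.symm⟩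
  exact ⟨rfl, congrArg Fin.val (hinj a hxy)⟩

section MarkedDigraph

variable {V : Type*} {E : V → V → Prop} {O : Set V}

def IsSuccessorMap (E : V → V → Prop) (O : Set V) (σ : V → V) : Prop :=
  ∀ v ∉ O, UniqueInNbr E v (σ v)

def unobserved (O : Set V) (σ : V → V) : Set V := {v | ∀ n, σ^[n] v ∉ O}

theorem iterate_mem_unobserved {σ : V → V} {v : V} (hv : v ∈ unobserved O σ) (k : ℕ) :
    σ^[k] v ∈ unobserved O σ := fun n => by
  rw [← iterate_add_apply]
  exact hv (n + k)

namespace IsSuccessorMap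

variable {σ : V → V}

theorem injOn (hσ : IsSuccessorMap E O σ) : InjOn σ Oᶜ := fun u hu v hv huv =>
  (hσ v hv).2 u (huv ▸ (hσ u hu).1)

theorem update [DecidableEq V] (hσ : IsSuccessorMap E O σ) {v w : V} (hvw : UniqueInNbr E v w) :
    IsSuccessorMap E O (Function.update σ v w) := by
  intro u hu
  by_cases huv : u = v
  · subst huv
    simpa using hvw
  · simpa [huv] using hσ u hu

theorem satisfiesP1 (hσ : IsSuccessorMap E O σ) : SatisfiesP1 E O :=
  fun v hv => ⟨σ v, hσ v hv⟩

theorem apply_eq_of_not_cycleSatisfiesP2 (hσ : IsSuccessorMap E O σ) {m : ℕ}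
    {c : Fin (m + 1) → V} (hc : IsCycle E c) (hcO : ∀ j, c j ∉ O)
    (hP2 : ¬ CycleSatisfiesP2 E c) (j : Fin (m + 1)) : σ (c j) = c (j + 1) := by
  obtain ⟨i, hi⟩ : ∃ i, c i = σ (c j) := by
    by_contra! hoff
    exact hP2 ⟨σ (c j), hoff, j, hσ _ (hcO j)⟩
  have hpred : c (i - 1) = c j := (hσ _ (hcO j)).2 _ (by simpa [hi] using hc.2 (i - 1))
  rw [← hi, ← hc.1 hpred, sub_add_cancel]

theorem satisfiesP2 (hσ : IsSuccessorMap E O σ) (rank : V → ℕ)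
    (hrank : ∀ v ∉ O, rank v < rank (σ v)) : SatisfiesP2 E O := by
  intro m c hc hcO
  by_contra hP2
  obtain ⟨j, hj⟩ := Fin.exists_apply_add_one_le (rank ∘ c)
  have := hrank _ (hcO j)
  rw [hσ.apply_eq_of_not_cycleSatisfiesP2 hc hcO hP2] at this
  exact hj.not_gt this

theorem exists_isPeriodicPt [Finite V] (hσ : IsSuccessorMap E O σ) {v : V}
    (hv : v ∈ unobserved O σ) : ∃ n, 0 < n ∧ IsPeriodicPt σ n v := by
  obtain ⟨a, b, hab, heq⟩ := Finite.exists_ne_map_eq_of_infinite fun n => σ^[n] v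
  wlog hlt : a < b generalizing a b
  · exact this b a hab.symm heq.symm (by omega)
  refine ⟨b - a, by omega, hσ.injOn.eq_of_iterate_eq (n := a)
    (fun k _ => iterate_mem_unobserved hv (b - a) k) (fun k _ => hv k) ?_⟩
  rw [← iterate_add_apply, Nat.add_sub_cancel' hlt.le]
  exact heq.symm

theorem exists_unobserved_ssubset [Finite V] (hP2 : SatisfiesP2 E O)
    (hσ : IsSuccessorMap E O σ) {v : V} (hv : v ∈ unobserved O σ) :
    ∃ σ', IsSuccessorMap E O σ' ∧ unobserved O σ' ⊂ unobserved O σ := by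
  classical
  obtain ⟨n, hn, hper⟩ := hσ.exists_isPeriodicPt hv
  obtain ⟨m, c, hcv, hc, hstep⟩ := hper.exists_injective_cycle hn
  have hcO : ∀ j, c j ∉ O := fun j => hcv j ▸ hv j
  obtain ⟨w, hw, j₀, hj₀⟩ := hP2 m c ⟨hc, fun j => hstep j ▸ (hσ _ (hcO j)).1⟩ hcO
  set σ' := Function.update σ (c j₀) w
  have hσ' : IsSuccessorMap E O σ' := hσ.update hj₀
  have hw' : w ∉ range c := fun ⟨j, hj⟩ => hw j hj
  have hclosed : Oᶜ ∩ σ' ⁻¹' range c ⊆ range c := by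
    rintro y ⟨hy, i, hi⟩
    have hy' : y ≠ c j₀ := by
      rintro rfl
      exact hw' ⟨i, by simpa [σ'] using hi⟩
    refine ⟨i - 1, hσ.injOn (hcO _) hy ?_⟩
    rw [hstep, sub_add_cancel, hi]
    exact update_of_ne hy' _ _
  have hj₀' : c j₀ ∉ unobserved O σ' := by
    intro h
    obtain ⟨n', hn', hper'⟩ := hσ'.exists_isPeriodicPt h
    refine iterate_notMem_of_inter_preimage_subset hclosed hw' (n := n' - 1)
      (fun k _ => ?_) ⟨j₀, ?_⟩
    · simpa [σ'] using iterate_mem_unobserved h (k + 1) 0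
    · rw [← update_self (c j₀) w σ, ← iterate_succ_apply, Nat.succ_eq_add_one,
        Nat.sub_add_cancel hn']
      exact hper'.symm
  have hsub : unobserved O σ' ⊆ unobserved O σ := by
    intro u hu k
    have hne : ∀ k, σ'^[k] u ≠ c j₀ := fun k hk => hj₀' (hk ▸ iterate_mem_unobserved hu k)
    rw [← iterate_update_of_forall_ne hne]
    exact hu k
  exact ⟨σ', hσ', (ssubset_iff_of_subset hsub).2
    ⟨c j₀, hcv j₀ ▸ iterate_mem_unobserved hv _, hj₀'⟩⟩

theorem eq_of_iterate_eq_of_notMem_image (hσ : IsSuccessorMap E O σ) {u₁ u₂ : V}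
    (hu₁ : u₁ ∉ σ '' Oᶜ) (hu₂ : u₂ ∉ σ '' Oᶜ) {a b : ℕ} (ha : ∀ k < a, σ^[k] u₁ ∉ O)
    (hb : ∀ k < b, σ^[k] u₂ ∉ O) (h : σ^[a] u₁ = σ^[b] u₂) : u₁ = u₂ ∧ a = b := by
  wlog hab : a ≤ b generalizing a b u₁ u₂
  · obtain ⟨h₁, h₂⟩ := this hu₂ hu₁ hb ha h.symm (by omega)
    exact ⟨h₁.symm, h₂.symm⟩
  obtain ⟨c, rfl⟩ := Nat.exists_eq_add_of_le hab
  rw [iterate_add_apply] at h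
  have hu : u₁ = σ^[c] u₂ := hσ.injOn.eq_of_iterate_eq ha
    (fun k hk => by rw [← iterate_add_apply]; exact hb _ (by omega)) h
  obtain _ | c := c
  · exact ⟨hu, rfl⟩
  · rw [iterate_succ_apply'] at hu
    exact (hu₁ ⟨_, hb c (by omega), hu.symm⟩).elim

theorem isObservedPath_iterate (hσ : IsSuccessorMap E O σ) {u : V} (hu : u ∉ σ '' Oᶜ) {d : ℕ}
    (hd : σ^[d] u ∈ O) (hdmin : ∀ k < d, σ^[k] u ∉ O) :
    IsObservedPath E O fun k : Fin (d + 1) => σ^[k] u := by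
  refine ⟨fun i j hij => ?_, fun k => ?_, hd, fun k hk => ?_⟩
  · have hlt : ∀ i : Fin (d + 1), ∀ k < (i : ℕ), σ^[k] u ∉ O := fun i k hk =>
      hdmin k (by omega)
    exact Fin.ext (hσ.eq_of_iterate_eq_of_notMem_image hu hu (hlt i) (hlt j) hij).2
  · simpa [iterate_succ_apply'] using hσ _ (hdmin k k.is_lt)
  · by_contra hne
    exact hdmin k (Fin.val_lt_last hne) hk

end IsSuccessorMap

theorem exists_isSuccessorMap_unobserved_eq_empty [Finite V] (hP1 : SatisfiesP1 E O)
    (hP2 : SatisfiesP2 E O) : ∃ σ, IsSuccessorMap E O σ ∧ unobserved O σ = ∅ := by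
  classical
  choose σ₀ hσ₀ using hP1
  obtain ⟨σ, hσ, hmin⟩ := Set.exists_min_image {σ | IsSuccessorMap E O σ}
    (fun σ => (unobserved O σ).ncard) (Set.toFinite _)
    ⟨fun v => if hv : v ∈ O then v else σ₀ v hv, fun v hv => by simpa [hv] using hσ₀ v hv⟩
  refine ⟨σ, hσ, Set.eq_empty_of_forall_notMem fun v hv => ?_⟩
  obtain ⟨σ', hσ', hlt⟩ := hσ.exists_unobserved_ssubset hP2 hv
  exact (hmin σ' hσ').not_gt (Set.ncard_lt_ncard hlt)

theorem iUnion_range_iterate_eq_univ [Finite V] {σ : V → V} (hO : unobserved O σ = ∅)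
    (d : V → ℕ) (hd : ∀ u, σ^[d u] u ∈ O) :
    ⋃ u : ↥(σ '' Oᶜ)ᶜ, range (fun k : Fin (d u + 1) => σ^[k] (u : V)) = univ := by
  set N := (⋃ u : ↥(σ '' Oᶜ)ᶜ, range (fun k : Fin (d u + 1) => σ^[k] (u : V)))ᶜ
  suffices N ⊆ unobserved O σ by
    rw [hO, subset_empty_iff, compl_empty_iff] at this
    exact this
  -- Every uncovered vertex is the image of a simple uncovered vertex; by counting, `σ` then maps
  -- the uncovered vertices into themselves and none of them is marked.
  have hN : N ⊆ σ '' (N ∩ Oᶜ) := by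
    intro v hv
    simp only [N, mem_compl_iff, mem_iUnion, mem_range, not_exists] at hv
    obtain ⟨y, hy, rfl⟩ : v ∈ σ '' Oᶜ := by
      by_contra hvS
      exact hv ⟨v, hvS⟩ 0 rfl
    refine ⟨y, ⟨?_, hy⟩, rfl⟩
    simp only [N, mem_compl_iff, mem_iUnion, mem_range, not_exists]
    intro u k hk
    have hlt : (k : ℕ) < d u := lt_of_le_of_ne (Nat.lt_succ_iff.mp k.is_lt) fun h => by
      rw [← hk, h] at hy
      exact hy (hd u)
    exact hv u ⟨k + 1, by omega⟩ (by simp [iterate_succ_apply', hk])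
  obtain ⟨hNO, hmaps⟩ := Set.subset_and_mapsTo_of_subset_image_inter hN
  exact fun v hv n => hNO (hmaps.iterate n hv)

theorem observedPathPartition_of_finite {ι : Type*} [Finite ι] (ℓ : ι → ℕ)
    (p : ∀ i, Fin (ℓ i + 1) → V) (hp : ∀ i, IsObservedPath E O (p i))
    (hdisj : Pairwise fun i j => Disjoint (range (p i)) (range (p j)))
    (hcover : ⋃ i, range (p i) = univ) : ObservedPathPartition E O := by
  set e := (Finite.equivFin ι).symm
  refine ⟨Nat.card ι, ℓ ∘ e, fun i => p (e i), fun i => hp (e i),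
    fun i j hij => hdisj (e.injective.ne hij), ?_⟩
  rw [← hcover]
  exact e.surjective.iUnion_comp fun i => range (p i)

theorem IsSuccessorMap.observedPathPartition [Finite V] {σ : V → V}
    (hσ : IsSuccessorMap E O σ) (hO : unobserved O σ = ∅) : ObservedPathPartition E O := by
  classical
  have hhit : ∀ v, ∃ n, σ^[n] v ∈ O := fun v => by
    by_contra! h
    exact (hO ▸ h : v ∈ (∅ : Set V))
  set d : V → ℕ := fun v => Nat.find (hhit v)
  have hsimple : ∀ v, ∀ k < d v, σ^[k] v ∉ O := fun v k => Nat.find_min (hhit v)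
  refine observedPathPartition_of_finite (fun u : ↥(σ '' Oᶜ)ᶜ => d u) (fun u k => σ^[k] (u : V))
    (fun u => hσ.isObservedPath_iterate u.2 (Nat.find_spec (hhit u)) (hsimple u))
    (fun u₁ u₂ hne => Set.disjoint_left.mpr ?_)
    (iUnion_range_iterate_eq_univ hO d fun u => Nat.find_spec (hhit u))
  rintro _ ⟨a, rfl⟩ ⟨b, hab⟩
  refine hne (Subtype.ext (hσ.eq_of_iterate_eq_of_notMem_image u₂.2 u₁.2 ?_ ?_ hab).1.symm) <;>
    exact fun k hk => hsimple _ k (by omega)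

theorem ObservedPathPartition.exists_ranked_isSuccessorMap (h : ObservedPathPartition E O) :
    ∃ (σ : V → V) (rank : V → ℕ), IsSuccessorMap E O σ ∧ ∀ v ∉ O, rank v < rank (σ v) := by
  obtain ⟨r, ℓ, p, hp, hdisj, hcover⟩ := h
  have hpos : ∀ v, ∃ i k, p i k = v := fun v => by
    simpa using hcover.ge (Set.mem_univ v)
  choose i k hik using hpos
  have hsucc : ∀ v ∉ O, ∃ k' : Fin (ℓ (i v)), k'.castSucc = k v := fun v hv =>
    Fin.exists_castSucc_eq.mpr fun hlast => hv (hik v ▸ hlast ▸ (hp (i v)).2.2.1)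
  -- `σ` steps along the paths and `rank` is the position on them; the wrap-around of `k v + 1`
  -- only happens at the marked end.
  refine ⟨fun v => p (i v) (k v + 1), fun v => k v, fun v hv => ?_, fun v hv => ?_⟩ <;>
    obtain ⟨k', hk'⟩ := hsucc v hv
  · have := (hp (i v)).2.1 k'
    rwa [← Fin.coeSucc_eq_succ, hk', hik] at this
  · have := (eq_and_val_eq_of_pairwise_disjoint_range (fun j => (hp j).1) hdisj
      (hik (p (i v) (k v + 1)))).2
    simp [this, ← hk', Fin.coeSucc_eq_succ]

end MarkedDigraph

/-- A marked digraph satisfies both Property P1 and Property P2 iff its vertex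
set can be partitioned into vertex-disjoint observed paths. -/
theorem P1_P2_iff_observed_path_partition {V : Type*} [Fintype V]
    (E : V → V → Prop) (O : Set V) :
    (SatisfiesP1 E O ∧ SatisfiesP2 E O) ↔ ObservedPathPartition E O := by
  constructor
  · rintro ⟨hP1, hP2⟩
    obtain ⟨σ, hσ, hO⟩ := exists_isSuccessorMap_unobserved_eq_empty hP1 hP2
    exact hσ.observedPathPartition hO
  · intro h
    obtain ⟨σ, rank, hσ, hrank⟩ := h.exists_ranked_isSuccessorMap
    exact ⟨hσ.satisfiesP1, hσ.satisfiesP2 rank hrank⟩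
end

section
/- Consider a discrete-time system over ℝ on nodes {1,…,n} with outputs at nodes {1,…,h}, whose interaction digraph G (marked at {1,…,h}) records the essential dependencies of the update functions, and suppose every update function that depends on exactly one coordinate is injective in that coordinate. If G satisfies both Property P1 and Property P2, then the system is observable. -/
open Relation Function

lemma no_trap {V : Type*} [Fintype V] [DecidableEq V] {E : V → V → Prop} {O : Set V}
    (hP2 : SatisfiesP2 E O) :
    ∀ B : Finset V, (∀ u ∈ B, u ∉ O) →
      (∀ u ∈ B, ∀ w, UniqueInNbr E u w → w ∈ B) →
      (∀ u ∈ B, ∃ w, UniqueInNbr E u w) → B = ∅ := by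
  classical
  intro B
  induction B using Finset.strongInduction with
  | _ B ih =>
    intro hBO hBcl hBsucc
    by_contra hBne
    obtain ⟨b₀, hb₀⟩ := Finset.nonempty_iff_ne_empty.mpr hBne
    -- choose a successor function on B
    have hchoice : ∀ u, ∃ w, (u ∈ B → UniqueInNbr E u w) := by
      intro u
      by_cases hu : u ∈ B
      · obtain ⟨w, hw⟩ := hBsucc u hu
        exact ⟨w, fun _ => hw⟩
      · exact ⟨u, fun h => absurd h hu⟩
    choose s hs using hchoice
    set g : ℕ → V := fun t => s^[t] b₀ with hg
    have hgsucc : ∀ t, g (t + 1) = s (g t) := fun t => Function.iterate_succ_apply' s t b₀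
    have hgB : ∀ t, g t ∈ B := by
      intro t
      induction t with
      | zero => exact hb₀
      | succ t iht =>
        rw [hgsucc]
        exact hBcl (g t) iht (s (g t)) (hs (g t) iht)
    -- find a first repeat
    have hPex : ∃ t, ∃ k, k < t ∧ g k = g t := by
      obtain ⟨a, b, hab, hgab⟩ := Finite.exists_ne_map_eq_of_infinite g
      rcases Nat.lt_or_ge a b with hl | hl
      · exact ⟨b, a, hl, hgab⟩
      · exact ⟨a, b, lt_of_le_of_ne hl (Ne.symm hab), hgab.symm⟩
    set l := Nat.find hPex with hldef
    obtain ⟨k, hkl, hgkl⟩ := Nat.find_spec hPex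
    have hmin : ∀ j, j < l → ¬ ∃ k', k' < j ∧ g k' = g j := fun j hj => Nat.find_min hPex hj
    set m := l - k - 1 with hmdef
    have hm : l = k + (m + 1) := by omega
    set c : Fin (m + 1) → V := fun i => g (k + i.val) with hc
    have hcB : ∀ j, c j ∈ B := fun j => hgB _
    have hlt : ∀ i j : Fin (m + 1), i.val < j.val → c i ≠ c j := by
      intro i j hij heq
      refine hmin (k + j.val) ?_ ⟨k + i.val, by omega, heq⟩
      have := j.isLt
      omega
    have hcinj : Function.Injective c := by
      intro i j hij
      by_contra hne
      have hvne : i.val ≠ j.val := fun hv => hne (Fin.ext hv)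
      rcases Nat.lt_or_ge i.val j.val with hl' | hl'
      · exact hlt i j hl' hij
      · exact hlt j i (lt_of_le_of_ne hl' (Ne.symm hvne)) hij.symm
    have hcedge : ∀ j : Fin (m + 1), c (j + 1) = s (c j) := by
      intro j
      by_cases hj : j.val < m
      · have h1 : (j + 1).val = j.val + 1 :=
          Fin.val_add_one_of_lt (by simpa [Fin.lt_def] using hj)
        show g (k + (j + 1).val) = s (g (k + j.val))
        rw [h1, show k + (j.val + 1) = (k + j.val) + 1 by omega]
        exact hgsucc (k + j.val)
      · have hj' : j = Fin.last m := by
          apply Fin.ext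
          have := j.isLt
          simp only [Fin.val_last]
          omega
        subst hj'
        rw [Fin.last_add_one]
        show g (k + (0:ℕ)) = s (g (k + (Fin.last m).val))
        simp only [Fin.val_last, Nat.add_zero]
        rw [hgkl, ← hldef, hm, show k + (m + 1) = (k + m) + 1 by omega]
        exact hgsucc (k + m)
    have hcyc : ∀ j, UniqueInNbr E (c j) (c (j + 1)) := by
      intro j
      rw [hcedge j]
      exact hs (c j) (hcB j)
    obtain ⟨v, hvC, j₀, hj₀⟩ :=
      hP2 m c ⟨hcinj, fun j => (hcyc j).1⟩ (fun j => hBO _ (hcB j))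
    have hvB : v ∈ B := hBcl _ (hcB j₀) v hj₀
    -- no UniqueInNbr-path can enter the cycle from outside
    have hreach : ∀ (i : Fin (m + 1)) (u : V),
        Relation.ReflTransGen (UniqueInNbr E) u (c i) → ∃ i', u = c i' := by
      intro i u hru
      induction hru using Relation.ReflTransGen.head_induction_on with
      | refl => exact ⟨i, rfl⟩
      | head h' hpath ihp =>
        obtain ⟨i', hi'⟩ := ihp
        rw [hi'] at h'
        have h1 := hcyc (i' - 1)
        rw [sub_add_cancel] at h1
        exact ⟨i' - 1, h1.2 _ h'.1⟩
    set B' := B.filter (fun u => ¬ ∃ i, Relation.ReflTransGen (UniqueInNbr E) u (c i))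
      with hB'
    have hss : B' ⊂ B := by
      refine Finset.filter_ssubset.mpr ⟨c 0, hcB 0, ?_⟩
      simp only [not_not]
      exact ⟨0, Relation.ReflTransGen.refl⟩
    have hB'empty : B' = ∅ := by
      refine ih B' hss ?_ ?_ ?_
      · exact fun u hu => hBO u (Finset.mem_filter.mp hu).1
      · intro u hu w huw
        obtain ⟨huB, hur⟩ := Finset.mem_filter.mp hu
        refine Finset.mem_filter.mpr ⟨hBcl u huB w huw, ?_⟩
        rintro ⟨i, hwi⟩
        exact hur ⟨i, hwi.head huw⟩
      · exact fun u hu => hBsucc u (Finset.mem_filter.mp hu).1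
    have hvB' : v ∈ B' := by
      refine Finset.mem_filter.mpr ⟨hvB, ?_⟩
      rintro ⟨i, hvi⟩
      obtain ⟨i', hi'⟩ := hreach i v hvi
      exact hvC i' hi'.symm
    rw [hB'empty] at hvB'
    exact absurd hvB' (Finset.notMem_empty v)

lemma reach_marked {V : Type*} [Fintype V] [DecidableEq V] {E : V → V → Prop} {O : Set V}
    (hP1 : SatisfiesP1 E O) (hP2 : SatisfiesP2 E O) (v : V) :
    ∃ w, w ∈ O ∧ Relation.ReflTransGen (UniqueInNbr E) v w := by
  classical
  by_contra hbad
  set Bad : V → Prop := fun u => ¬ ∃ w, w ∈ O ∧ Relation.ReflTransGen (UniqueInNbr E) u w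
    with hBad
  set B := Finset.univ.filter Bad with hB
  have hmem : ∀ u, u ∈ B ↔ Bad u := by
    intro u; simp [hB]
  have hBO : ∀ u ∈ B, u ∉ O := by
    intro u hu huO
    exact (hmem u).mp hu ⟨u, huO, Relation.ReflTransGen.refl⟩
  have hBempty : B = ∅ := by
    refine no_trap hP2 B hBO ?_ ?_
    · intro u hu w huw
      refine (hmem w).mpr ?_
      rintro ⟨w', hw', hww'⟩
      exact (hmem u).mp hu ⟨w', hw', hww'.head huw⟩
    · exact fun u hu => hP1 u (hBO u hu)
  have hvB : v ∈ B := (hmem v).mpr hbad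
  rw [hBempty] at hvB
  exact absurd hvB (Finset.notMem_empty v)

lemma prop_step {n : ℕ} (f : Fin n → (Fin n → ℝ) → ℝ)
    (hinj : ∀ i j, (∀ k, Essential (f i) k ↔ k = j) →
      ∀ x y : Fin n → ℝ, f i x = f i y → x j = y j)
    {i w : Fin n} (hu : UniqueInNbr (DepEdge f) i w)
    {x y : Fin n → ℝ} (hxy : x i ≠ y i) : f w x ≠ f w y := by
  intro he
  have hiff : ∀ k, Essential (f w) k ↔ k = i := by
    intro k
    constructor
    · exact fun hk => hu.2 k hk
    · rintro rfl
      exact hu.1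
  exact hxy (hinj w i hiff x y he)


/-- A discrete-time system over ℝ whose update functions depending on exactly
one coordinate are injective in that coordinate, and whose interaction digraph
(marked at the output indices) satisfies both Property P1 and Property P2, is
observable. -/
theorem system_observable_of_P1_P2 {n h : ℕ} (hh1 : 1 ≤ h) (hhn : h ≤ n)
    (f : Fin n → (Fin n → ℝ) → ℝ)
    (hinj : ∀ i j, (∀ k, Essential (f i) k ↔ k = j) →
      ∀ x y : Fin n → ℝ, f i x = f i y → x j = y j)
    (hP1 : SatisfiesP1 (DepEdge f) {i : Fin n | (i : ℕ) < h})
    (hP2 : SatisfiesP2 (DepEdge f) {i : Fin n | (i : ℕ) < h}) :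
    Observable f h := by
  classical
  intro x y hxy
  by_contra hcon
  push_neg at hcon
  obtain ⟨i₀, hi₀⟩ := Function.ne_iff.mp hxy
  obtain ⟨w, hwO, hpath⟩ := reach_marked hP1 hP2 i₀
  have key : ∀ (a b : Fin n), Relation.ReflTransGen (UniqueInNbr (DepEdge f)) a b →
      ∀ t : ℕ, (netStep f)^[t] x a ≠ (netStep f)^[t] y a →
      ∃ t' : ℕ, (netStep f)^[t'] x b ≠ (netStep f)^[t'] y b := by
    intro a b hab
    induction hab with
    | refl => exact fun t ht => ⟨t, ht⟩
    | tail hbc hcd ihp =>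
      intro t ht
      obtain ⟨t', ht'⟩ := ihp t ht
      refine ⟨t' + 1, ?_⟩
      rw [Function.iterate_succ_apply', Function.iterate_succ_apply']
      exact prop_step f hinj hcd ht'
  obtain ⟨t', ht'⟩ := key i₀ w hpath 0 hi₀
  exact ht' (hcon t' w hwO)
end

section
/- Consider a discrete-time system over ℝ on nodes {1,…,n} with outputs at nodes {1,…,h}, whose interaction digraph G (marked at {1,…,h}) records the essential dependencies of the update functions, and suppose every update function that depends on exactly one coordinate is injective in that coordinate. If the vertex set of G can be partitioned into vertex-disjoint observed paths, then the system is observable. -/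
lemma step_ne_aux {n : ℕ} (f : Fin n → (Fin n → ℝ) → ℝ)
    (hinj : ∀ i j, (∀ k, Essential (f i) k ↔ k = j) →
      ∀ x y : Fin n → ℝ, f i x = f i y → x j = y j)
    {u w : Fin n} (huw : UniqueInNbr (DepEdge f) u w)
    {x y : Fin n → ℝ} (hxy : x u ≠ y u) : netStep f x w ≠ netStep f y w := by
  intro hcon
  exact hxy (hinj w u (fun k => ⟨fun hk => huw.2 k hk, fun hk => hk ▸ huw.1⟩) x y hcon)

lemma path_prop_aux {n : ℕ} (f : Fin n → (Fin n → ℝ) → ℝ)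
    (hinj : ∀ i j, (∀ k, Essential (f i) k ↔ k = j) →
      ∀ x y : Fin n → ℝ, f i x = f i y → x j = y j)
    {s : ℕ} (p : Fin (s + 1) → Fin n)
    (hp : ∀ k : Fin s, UniqueInNbr (DepEdge f) (p k.castSucc) (p k.succ)) :
    ∀ (d : ℕ) (k : Fin (s + 1)), (k : ℕ) + d = s →
      ∀ x y : Fin n → ℝ, x (p k) ≠ y (p k) →
      (netStep f)^[d] x (p (Fin.last s)) ≠ (netStep f)^[d] y (p (Fin.last s)) := by
  intro d
  induction d with
  | zero =>
    intro k hk x y hxy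
    have hkl : k = Fin.last s := Fin.ext (by simpa using hk)
    simpa [hkl] using hxy
  | succ d ih =>
    intro k hk x y hxy
    have hks : (k : ℕ) < s := by omega
    set k₀ : Fin s := ⟨k, hks⟩ with hk₀
    have h1 : p k₀.castSucc = p k := rfl
    have h2 : netStep f x (p k₀.succ) ≠ netStep f y (p k₀.succ) :=
      step_ne_aux f hinj (hp k₀) (h1 ▸ hxy)
    have h3 := ih k₀.succ (show (k:ℕ) + 1 + d = s by omega)
      (netStep f x) (netStep f y) h2
    simpa [Function.iterate_succ_apply] using h3

/-- A discrete-time system over ℝ whose update functions depending on exactly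
one coordinate are injective in that coordinate, and whose interaction digraph
(marked at the output indices) can be partitioned into vertex-disjoint observed
paths, is observable. -/
theorem system_observable_of_observed_path_partition {n h : ℕ}
    (hh1 : 1 ≤ h) (hhn : h ≤ n)
    (f : Fin n → (Fin n → ℝ) → ℝ)
    (hinj : ∀ i j, (∀ k, Essential (f i) k ↔ k = j) →
      ∀ x y : Fin n → ℝ, f i x = f i y → x j = y j)
    (hpart : ObservedPathPartition (DepEdge f) {i : Fin n | (i : ℕ) < h}) :
    Observable f h := by
  obtain ⟨r, ℓ, p, hpaths, _, hcover⟩ := hpart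
  intro x y hxy
  obtain ⟨v, hv⟩ : ∃ v, x v ≠ y v := by
    by_contra hcon
    push_neg at hcon
    exact hxy (funext hcon)
  have hv' : v ∈ ⋃ i, Set.range (p i) := hcover ▸ Set.mem_univ v
  obtain ⟨i, k, hk⟩ : ∃ i k, p i k = v := by
    simpa [Set.mem_iUnion] using hv'
  obtain ⟨hpinj, hpedge, hplast, hponly⟩ := hpaths i
  refine ⟨ℓ i - (k : ℕ), p i (Fin.last (ℓ i)), hplast, ?_⟩
  exact path_prop_aux f hinj (p i) hpedge (ℓ i - k) k (by omega) x y (hk ▸ hv)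
end

section
/- Let G be an acyclic marked digraph. Then every set Λ ⊆ V for which some control of Λ yields a marked digraph satisfying both Property P1 and Property P2 has cardinality at least |M̄_G|; that is, N*_G ≥ |M̄_G|. -/
/-- `Ehat` is obtained from `E` by controlling the vertices of `Λ`: every
vertex not in `Λ` keeps exactly the same in-neighbors. -/
def Control {V : Type*} (E Ehat : V → V → Prop) (Λ : Set V) : Prop :=
  ∀ w, w ∉ Λ → ∀ u, Ehat u w ↔ E u w

/-- `Mbar E O` is the set of simple vertices that do not satisfy Property P1. -/
def Mbar {V : Type*} (E : V → V → Prop) (O : Set V) : Set V :=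
  {v | v ∉ O ∧ ¬ ∃ w, UniqueInNbr E v w}

/-- A digraph is acyclic if it contains no directed cycle. -/
def Acyclic {V : Type*} (E : V → V → Prop) : Prop :=
  ¬ ∃ (m : ℕ) (c : Fin (m + 1) → V), IsCycle E c


/-- For an acyclic marked digraph, every controlled set whose control yields a
marked digraph satisfying Properties P1 and P2 has cardinality at least
`|M̄_G|`. -/
theorem card_controlled_ge_Mbar_of_acyclic {V : Type*} [Fintype V]
    (E : V → V → Prop) (O : Set V) (hacyc : Acyclic E)
    (Λ : Set V) (Ehat : V → V → Prop)
    (hctrl : Control E Ehat Λ)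
    (hP1 : SatisfiesP1 Ehat O) (hP2 : SatisfiesP2 Ehat O) :
    (Mbar E O).ncard ≤ Λ.ncard := by
  have key : ∀ v ∈ Mbar E O, ∃ w ∈ Λ, UniqueInNbr Ehat v w := by
    intro v hv
    obtain ⟨hvO, hno⟩ := hv
    obtain ⟨w, hw⟩ := hP1 v hvO
    refine ⟨w, ?_, hw⟩
    by_contra hwΛ
    exact hno ⟨w, ⟨(hctrl w hwΛ v).mp hw.1,
      fun u' hu' => hw.2 u' ((hctrl w hwΛ u').mpr hu')⟩⟩
  choose f hfΛ hf using key
  classical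
  apply Set.ncard_le_ncard_of_injOn (fun v => if h : v ∈ Mbar E O then f v h else v)
  · intro v hv; simp only [dif_pos hv]; exact hfΛ v hv
  · intro a ha b hb hab
    simp only [dif_pos ha, dif_pos hb] at hab
    have h1 := hf a ha
    have h2 := hf b hb
    rw [hab] at h1
    exact h2.2 a h1.1
end

section
/- Let G be an acyclic marked digraph with at least one marked vertex. Then N*_G = |M̄_G|; that is, there exists a set Λ ⊆ V with |Λ| = |M̄_G| and a control of Λ whose resulting marked digraph satisfies both Property P1 and Property P2, and no set of smaller cardinality admits such a control. -/
section IterStop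
variable {V : Type*}

open Classical in
noncomputable def iterStop (P : Set V) (step : V → V) : ℕ → V → V
  | 0, v => v
  | (f+1), v => if v ∈ P then iterStop P step f (step v) else v

variable {P : Set V} {step : V → V} {ρ : V → ℕ} {B : ℕ}

open Classical in
lemma iterStop_succ (f : ℕ) (v : V) :
    iterStop P step (f+1) v = if v ∈ P then iterStop P step f (step v) else v := rfl

lemma iterStop_fix (hv : v ∉ P) : ∀ f, iterStop P step f v = v
  | 0 => rfl
  | (f+1) => by rw [iterStop_succ, if_neg hv]

lemma iterStop_notin (h1 : ∀ v ∈ P, ρ v < ρ (step v)) (h2 : ∀ v, ρ v ≤ B) :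
    ∀ f (v : V), B ≤ ρ v + f → iterStop P step f v ∉ P := by
  intro f
  induction f with
  | zero =>
    intro v hv hvP
    have := h1 v hvP
    have := h2 (step v)
    omega
  | succ f ih =>
    intro v hv
    rw [iterStop_succ]
    split
    · exact ih (step v) (by have := h1 v ‹_›; omega)
    · exact ‹_›

lemma iterStop_succ_eq (h1 : ∀ v ∈ P, ρ v < ρ (step v)) (h2 : ∀ v, ρ v ≤ B) :
    ∀ f (v : V), B ≤ ρ v + f → iterStop P step (f+1) v = iterStop P step f v := by
  intro f
  induction f with
  | zero =>
    intro v hv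
    have hvP : v ∉ P := by
      intro hvP
      have := h1 v hvP; have := h2 (step v); omega
    rw [iterStop_succ, if_neg hvP]; rfl
  | succ f ih =>
    intro v hv
    by_cases hvP : v ∈ P
    · rw [iterStop_succ, if_pos hvP, ih (step v) (by have := h1 v hvP; omega)]
      rw [iterStop_succ, if_pos hvP]
    · rw [iterStop_succ, if_neg hvP, iterStop_fix hvP]

lemma iterStop_step (h1 : ∀ v ∈ P, ρ v < ρ (step v)) (h2 : ∀ v, ρ v ≤ B)
    (hvP : v ∈ P) : iterStop P step B (step v) = iterStop P step B v := by
  conv_rhs => rw [← iterStop_succ_eq h1 h2 B v (by omega)]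
  rw [iterStop_succ, if_pos hvP]

end IterStop

section Walks
variable {V : Type*} {E : V → V → Prop}

lemma transGen_walk {a b : V} (h : Relation.TransGen E a b) :
    ∃ p, 1 ≤ p ∧ ∃ g : ℕ → V, g 0 = a ∧ g p = b ∧ ∀ i < p, E (g i) (g (i+1)) := by
  induction h with
  | @single b hab =>
    exact ⟨1, le_refl _, fun i => if i = 0 then a else b, by simp, by simp, by
      intro i hi
      interval_cases i
      simpa using hab⟩
  | @tail b c hab hbc ih =>
    obtain ⟨p, hp, g, h0, hpb, hedges⟩ := ih
    refine ⟨p+1, by omega, fun i => if i ≤ p then g i else c, by simp [h0], by simp, ?_⟩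
    intro i hi
    show E (if i ≤ p then g i else c) (if i + 1 ≤ p then g (i+1) else c)
    by_cases hip : i < p
    · simp only [if_pos (by omega : i ≤ p), if_pos (by omega : i + 1 ≤ p)]
      exact hedges i hip
    · have hieq : i = p := by omega
      rw [if_pos (by omega : i ≤ p), if_neg (by omega : ¬ i + 1 ≤ p), hieq, hpb]
      exact hbc

lemma no_closed_walk (hacyc : Acyclic E) :
    ∀ p, 1 ≤ p → ∀ g : ℕ → V, (∀ i < p, E (g i) (g (i+1))) → g p = g 0 → False := by
  intro p
  induction p using Nat.strong_induction_on with
  | _ p ih =>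
    intro hp g hedges hclose
    by_cases hinj : ∀ i < p, ∀ j < p, g i = g j → i = j
    · obtain ⟨m, rfl⟩ := Nat.exists_eq_succ_of_ne_zero (by omega : p ≠ 0)
      apply hacyc
      refine ⟨m, fun j => g j.val, ?_, ?_⟩
      · intro i j hij
        exact Fin.ext (hinj i.val i.isLt j.val j.isLt hij)
      · intro j
        show E (g j.val) (g ((j+1 : Fin (m+1)).val))
        by_cases hj : j.val < m
        · have h1 : ((j+1 : Fin (m+1))).val = j.val + 1 := by
            simp [Fin.add_def, Nat.mod_eq_of_lt (by omega : j.val + 1 < m + 1)]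
          rw [h1]
          exact hedges j.val (by omega)
        · have hjm : j.val = m := by omega
          have h1 : ((j+1 : Fin (m+1))).val = 0 := by
            simp [Fin.add_def, hjm]
          rw [h1, hjm, ← hclose]
          exact hedges m (by omega)
    · push_neg at hinj
      obtain ⟨i, hi, j, hj, heq, hne⟩ := hinj
      have key : ∀ i j, i < j → j < p → g i = g j → False := by
        intro i j hij hjp heq
        apply ih (j - i) (by omega) (by omega) (fun l => g (i + l))
        · intro l hl
          show E (g (i + l)) (g (i + (l + 1)))
          have hh : i + (l + 1) = (i + l) + 1 := by ring
          rw [hh]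
          exact hedges (i + l) (by omega)
        · show g (i + (j - i)) = g (i + 0)
          have h2 : i + (j - i) = j := by omega
          rw [h2, Nat.add_zero]
          exact heq.symm
      rcases lt_trichotomy i j with h | h | h
      · exact key i j h hj heq
      · exact hne h
      · exact key j i h hi heq.symm

lemma transGen_irrefl (hacyc : Acyclic E) (a : V) : ¬ Relation.TransGen E a a := by
  intro h
  obtain ⟨p, hp, g, h0, hpa, hedges⟩ := transGen_walk h
  exact no_closed_walk hacyc p hp g hedges (by rw [h0, hpa])

end Walks

section Rank
variable {V : Type*} [Fintype V] {E : V → V → Prop}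

noncomputable def erank (E : V → V → Prop) (v : V) : ℕ :=
  Set.ncard {u | Relation.TransGen E u v}

lemma erank_lt (hacyc : Acyclic E) {u v : V} (h : E u v) : erank E u < erank E v := by
  apply Set.ncard_lt_ncard _ (Set.toFinite _)
  constructor
  · intro x hx
    exact Relation.TransGen.tail hx h
  · intro hsub
    exact transGen_irrefl hacyc u (hsub (Relation.TransGen.single h))

lemma erank_lt_card (hacyc : Acyclic E) (v : V) : erank E v < Fintype.card V := by
  have huniv : (Set.univ : Set V).ncard = Fintype.card V := by
    rw [Set.ncard_univ, Nat.card_eq_fintype_card]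
  rw [← huniv]
  apply Set.ncard_lt_ncard _ (Set.toFinite _)
  rw [Set.ssubset_univ_iff]
  intro heq
  have : v ∈ {u | Relation.TransGen E u v} := heq ▸ Set.mem_univ v
  exact transGen_irrefl hacyc v this

end Rank

/-- For an acyclic marked digraph with at least one marked vertex,
`N*_G = |M̄_G|`: there is a controlled set of cardinality `|M̄_G|` whose
control yields a marked digraph satisfying Properties P1 and P2, and no
smaller set admits such a control. -/
theorem min_controlled_card_eq_Mbar_of_acyclic {V : Type*} [Fintype V]
    (E : V → V → Prop) (O : Set V) (hacyc : Acyclic E) (hO : O.Nonempty) :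
    (∃ (Λ : Set V) (Ehat : V → V → Prop),
        Λ.ncard = (Mbar E O).ncard ∧ Control E Ehat Λ ∧
        SatisfiesP1 Ehat O ∧ SatisfiesP2 Ehat O) ∧
    (∀ (Λ : Set V) (Ehat : V → V → Prop),
        Control E Ehat Λ → SatisfiesP1 Ehat O → SatisfiesP2 Ehat O →
        (Mbar E O).ncard ≤ Λ.ncard) := by
  classical
  obtain ⟨o, ho⟩ := hO
  have hne : Nonempty V := ⟨o⟩
  set n := Fintype.card V with hn
  have hn1 : 1 ≤ n := Fintype.card_pos
  set r := erank E with hr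
  have hrE : ∀ {u v : V}, E u v → r u < r v := fun h => erank_lt hacyc h
  have hrn : ∀ v, r v < n := fun v => erank_lt_card hacyc v
  have hrB : ∀ v, r v ≤ n := fun v => le_of_lt (hrn v)
  -- uniqueness of unique in-neighbors
  have huniq : ∀ {F : V → V → Prop} {u u' w : V},
      UniqueInNbr F u w → UniqueInNbr F u' w → u = u' :=
    fun h h' => (h'.2 _ h.1).symm ▸ rfl
  set S : Set V := {u | u ∉ O ∧ ∃ w, UniqueInNbr E u w} with hSdef
  have hM_mem : ∀ v, v ∈ Mbar E O ↔ (v ∉ O ∧ ¬ ∃ w, UniqueInNbr E v w) := fun v => Iff.rfl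
  have hS_mem : ∀ v, v ∈ S ↔ (v ∉ O ∧ ∃ w, UniqueInNbr E v w) := fun v => Iff.rfl
  have hMS : ∀ v ∈ Mbar E O, v ∉ S := fun v hv hvS => ((hM_mem v).mp hv).2 ((hS_mem v).mp hvS).2
  have hOS : ∀ v ∈ O, v ∉ S := fun v hv hvS => ((hS_mem v).mp hvS).1 hv
  have hOM : ∀ v ∈ O, v ∉ Mbar E O := fun v hv hvM => ((hM_mem v).mp hvM).1 hv
  have hcover : ∀ v, v ∉ O → v ∈ S ∨ v ∈ Mbar E O := by
    intro v hv
    by_cases h : ∃ w, UniqueInNbr E v w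
    · exact Or.inl ((hS_mem v).mpr ⟨hv, h⟩)
    · exact Or.inr ((hM_mem v).mpr ⟨hv, h⟩)
  -- sigma : chosen witness
  obtain ⟨σ, hσ⟩ : ∃ σ : V → V, ∀ u ∈ S, UniqueInNbr E u (σ u) := by
    refine ⟨fun u => if h : ∃ w, UniqueInNbr E u w then h.choose else u, fun u hu => ?_⟩
    have h := ((hS_mem u).mp hu).2
    simp only [dif_pos h]
    exact h.choose_spec
  have hσinj : ∀ u1 ∈ S, ∀ u2 ∈ S, σ u1 = σ u2 → u1 = u2 := by
    intro u1 h1 u2 h2 heq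
    exact huniq (hσ u1 h1) (heq ▸ hσ u2 h2)
  have hσr : ∀ u ∈ S, r u < r (σ u) := fun u hu => hrE (hσ u hu).1
  -- endOf
  obtain ⟨endOf, hend_notin, hend_fix, hend_sigma⟩ :
      ∃ endOf : V → V, (∀ v, endOf v ∉ S) ∧ (∀ v, v ∉ S → endOf v = v) ∧
        (∀ v ∈ S, endOf (σ v) = endOf v) := by
    refine ⟨iterStop S σ n, fun v => ?_, fun v hv => ?_, fun v hv => ?_⟩
    · exact iterStop_notin (ρ := r) (B := n) hσr hrB n v (by omega)
    · exact iterStop_fix hv n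
    · exact iterStop_step (ρ := r) (B := n) hσr hrB hv
  -- sigma inverse
  obtain ⟨σinv, hσinv⟩ : ∃ σinv : V → V,
      ∀ w ∈ σ '' S, σinv w ∈ S ∧ σ (σinv w) = w := by
    refine ⟨fun w => if h : ∃ u, u ∈ S ∧ σ u = w then h.choose else w, fun w hw => ?_⟩
    obtain ⟨u, hu, huw⟩ := hw
    have h : ∃ u, u ∈ S ∧ σ u = w := ⟨u, hu, huw⟩
    simp only [dif_pos h]
    exact ⟨h.choose_spec.1, h.choose_spec.2⟩
  have hσinvr : ∀ w ∈ σ '' S, (fun v => n - r v) w < (fun v => n - r v) (σinv w) := by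
    intro w hw
    have h1 : r (σinv w) < r w := by
      have := hσr (σinv w) (hσinv w hw).1
      rwa [(hσinv w hw).2] at this
    have h2 := hrn w
    simp only
    omega
  -- startOf
  obtain ⟨startOf, hstart_notin, hstart_end⟩ :
      ∃ startOf : V → V, (∀ e, startOf e ∉ σ '' S) ∧
        (∀ e, e ∉ S → endOf (startOf e) = e) := by
    have hB : ∀ v : V, (fun v => n - r v) v ≤ n := fun v => by simp only; omega
    refine ⟨iterStop (σ '' S) σinv n, fun e => ?_, fun e he => ?_⟩
    · exact iterStop_notin (ρ := fun v => n - r v) (B := n) hσinvr hB n e (by omega)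
    · have key : ∀ f w, endOf (iterStop (σ '' S) σinv f w) = endOf w := by
        intro f
        induction f with
        | zero => intro w; rfl
        | succ f ih =>
          intro w
          rw [iterStop_succ]
          by_cases hw : w ∈ σ '' S
          · rw [if_pos hw, ih (σinv w)]
            have h1 := hend_sigma (σinv w) (hσinv w hw).1
            rw [(hσinv w hw).2] at h1
            exact h1.symm
          · rw [if_neg hw]
      rw [key n e, hend_fix e he]
  -- psi : injection into ℕ
  obtain ⟨ψ, hψinj, hψn⟩ : ∃ ψ : V → ℕ, Function.Injective ψ ∧ ∀ v, ψ v < n := by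
    refine ⟨fun v => ((Fintype.equivFin V) v).val, ?_, fun v => ?_⟩
    · intro a b hab
      exact (Fintype.equivFin V).injective (Fin.ext hab)
    · exact ((Fintype.equivFin V) v).isLt
  -- next
  obtain ⟨next, hnext⟩ : ∃ next : V → V, ∀ v ∈ Mbar E O,
      (next v ∈ Mbar E O ∧ ψ v < ψ (next v) ∧
        ∀ u ∈ Mbar E O, ψ v < ψ u → ψ (next v) ≤ ψ u) ∨
      (next v = o ∧ ∀ u ∈ Mbar E O, ¬ ψ v < ψ u) := by
    refine ⟨fun v => if h : ∃ u, u ∈ {u | u ∈ Mbar E O ∧ ψ v < ψ u} ∧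
        ∀ u' ∈ {u | u ∈ Mbar E O ∧ ψ v < ψ u}, ψ u ≤ ψ u' then h.choose else o,
      fun v hv => ?_⟩
    by_cases hA : ∃ u, u ∈ Mbar E O ∧ ψ v < ψ u
    · obtain ⟨u0, hu0⟩ := hA
      obtain ⟨b, hb, hbmin⟩ := Set.exists_min_image {u | u ∈ Mbar E O ∧ ψ v < ψ u} ψ
        (Set.toFinite _) ⟨u0, hu0⟩
      have h : ∃ u, u ∈ {u | u ∈ Mbar E O ∧ ψ v < ψ u} ∧
          ∀ u' ∈ {u | u ∈ Mbar E O ∧ ψ v < ψ u}, ψ u ≤ ψ u' := ⟨b, hb, hbmin⟩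
      simp only [dif_pos h]
      left
      refine ⟨h.choose_spec.1.1, h.choose_spec.1.2, fun u hu hvu => ?_⟩
      exact h.choose_spec.2 u ⟨hu, hvu⟩
    · push_neg at hA
      have h : ¬ ∃ u, u ∈ {u | u ∈ Mbar E O ∧ ψ v < ψ u} ∧
          ∀ u' ∈ {u | u ∈ Mbar E O ∧ ψ v < ψ u}, ψ u ≤ ψ u' := by
        rintro ⟨u, ⟨hu1, hu2⟩, -⟩
        exact absurd hu2 (not_lt.mpr (hA u hu1))
      simp only [dif_neg h]
      exact Or.inr ⟨by trivial, fun u hu => not_lt.mpr (hA u hu)⟩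
  have hnext_notS : ∀ v ∈ Mbar E O, next v ∉ S := by
    intro v hv
    rcases hnext v hv with ⟨h1, -, -⟩ | ⟨h1, -⟩
    · exact hMS _ h1
    · exact h1 ▸ hOS o ho
  have hnext_inj : ∀ v1 ∈ Mbar E O, ∀ v2 ∈ Mbar E O, next v1 = next v2 → v1 = v2 := by
    have key : ∀ v1 ∈ Mbar E O, ∀ v2 ∈ Mbar E O, ψ v1 < ψ v2 → next v1 = next v2 → False := by
      intro v1 h1 v2 h2 hψ12 heq
      rcases hnext v1 h1 with ⟨h1M, h1lt, h1min⟩ | ⟨h1o, h1none⟩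
      · rcases hnext v2 h2 with ⟨h2M, h2lt, h2min⟩ | ⟨h2o, h2none⟩
        · have ha := h1min v2 h2 hψ12
          rw [heq] at ha
          omega
        · rw [heq, h2o] at h1M
          exact hOM o ho h1M
      · exact h1none v2 h2 hψ12
    intro v1 h1 v2 h2 heq
    by_contra hne
    rcases lt_trichotomy (ψ v1) (ψ v2) with h | h | h
    · exact key v1 h1 v2 h2 h heq
    · exact hne (hψinj h)
    · exact key v2 h2 v1 h1 h heq.symm
  -- tau
  obtain ⟨τ, hτS, hτM⟩ : ∃ τ : V → V, (∀ u ∈ S, τ u = σ u) ∧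
      (∀ v ∈ Mbar E O, τ v = startOf (next v)) := by
    refine ⟨fun v => if v ∈ S then σ v else startOf (next v), fun u hu => if_pos hu,
      fun v hv => if_neg (hMS v hv)⟩
  have hτinjM : ∀ v1 ∈ Mbar E O, ∀ v2 ∈ Mbar E O, τ v1 = τ v2 → v1 = v2 := by
    intro v1 h1 v2 h2 heq
    rw [hτM v1 h1, hτM v2 h2] at heq
    have := congrArg endOf heq
    rw [hstart_end _ (hnext_notS v1 h1), hstart_end _ (hnext_notS v2 h2)] at this
    exact hnext_inj v1 h1 v2 h2 this
  have hτMimg : ∀ v ∈ Mbar E O, τ v ∉ σ '' S := by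
    intro v hv
    rw [hτM v hv]
    exact hstart_notin _
  have hτinj : ∀ v1, v1 ∉ O → ∀ v2, v2 ∉ O → τ v1 = τ v2 → v1 = v2 := by
    intro v1 h1 v2 h2 heq
    rcases hcover v1 h1 with hc1 | hc1 <;> rcases hcover v2 h2 with hc2 | hc2
    · rw [hτS v1 hc1, hτS v2 hc2] at heq
      exact hσinj v1 hc1 v2 hc2 heq
    · exfalso
      apply hτMimg v2 hc2
      rw [← heq, hτS v1 hc1]
      exact Set.mem_image_of_mem σ hc1
    · exfalso
      apply hτMimg v1 hc1
      rw [heq, hτS v2 hc2]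
      exact Set.mem_image_of_mem σ hc2
    · exact hτinjM v1 hc1 v2 hc2 heq
  -- cRank and N
  obtain ⟨cR, hcRM, hcRn⟩ : ∃ cR : V → ℕ, (∀ v ∈ Mbar E O, cR v = n - ψ v) ∧
      (∀ v, v ∉ Mbar E O → cR v = 0) := by
    refine ⟨fun v => if v ∈ Mbar E O then n - ψ v else 0, fun v hv => if_pos hv,
      fun v hv => if_neg hv⟩
  obtain ⟨N, hN⟩ : ∃ N : V → ℕ, ∀ v, N v = (n - r v) + (n+1) * cR (endOf v) :=
    ⟨_, fun v => rfl⟩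
  have hNdec : ∀ v, v ∉ O → N (τ v) < N v := by
    intro v hv
    rcases hcover v hv with hc | hc
    · rw [hτS v hc, hN, hN, hend_sigma v hc]
      have h1 := hσr v hc
      have h2 := hrn v
      have : n - r (σ v) < n - r v := by omega
      omega
    · rw [hτM v hc, hN, hN, hstart_end _ (hnext_notS v hc), hend_fix v (hMS v hc)]
      have hlt : cR (next v) < cR v := by
        rcases hnext v hc with ⟨h1M, h1lt, -⟩ | ⟨h1o, -⟩
        · rw [hcRM _ h1M, hcRM _ hc]
          have := hψn (next v)
          omega
        · rw [h1o, hcRn o (hOM o ho), hcRM _ hc]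
          have := hψn v
          omega
      have hA : n - r (startOf (next v)) ≤ n := Nat.sub_le _ _
      calc (n - r (startOf (next v))) + (n+1) * cR (next v)
          < (n+1) + (n+1) * cR (next v) := by omega
        _ = (n+1) * (cR (next v) + 1) := by ring
        _ ≤ (n+1) * cR v := Nat.mul_le_mul_left _ hlt
        _ ≤ (n - r v) + (n+1) * cR v := Nat.le_add_left _ _
  -- Lambda and Ehat
  set Λ : Set V := τ '' (Mbar E O) with hΛdef
  have hΛimg : ∀ w ∈ Λ, w ∉ σ '' S := by
    rintro w ⟨v, hv, rfl⟩
    exact hτMimg v hv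
  obtain ⟨Ehat, hEhat⟩ : ∃ Eh : V → V → Prop, ∀ u w,
      Eh u w ↔ (if w ∈ Λ then (u ∈ Mbar E O ∧ τ u = w) else E u w) :=
    ⟨_, fun u w => Iff.rfl⟩
  have hE_out : ∀ w, w ∉ Λ → ∀ u, Ehat u w ↔ E u w := by
    intro w hw u
    rw [hEhat, if_neg hw]
  have hE_in : ∀ w ∈ Λ, ∀ u, Ehat u w ↔ (u ∈ Mbar E O ∧ τ u = w) := by
    intro w hw u
    rw [hEhat, if_pos hw]
  have hUvM : ∀ v ∈ Mbar E O, UniqueInNbr Ehat v (τ v) := by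
    intro v hv
    have hmem : τ v ∈ Λ := Set.mem_image_of_mem τ hv
    constructor
    · exact (hE_in _ hmem v).mpr ⟨hv, rfl⟩
    · intro u' hu'
      have h := (hE_in _ hmem u').mp hu'
      exact hτinjM u' h.1 v hv h.2
  have hUvS : ∀ u ∈ S, UniqueInNbr Ehat u (τ u) := by
    intro u hu
    have hτu : τ u ∉ Λ := by
      intro hmem
      exact hΛimg _ hmem (hτS u hu ▸ Set.mem_image_of_mem σ hu)
    have hE := hσ u hu
    rw [← hτS u hu] at hE
    exact ⟨(hE_out _ hτu u).mpr hE.1, fun u' h' => hE.2 u' ((hE_out _ hτu u').mp h')⟩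
  have hUsimple : ∀ v, v ∉ O → UniqueInNbr Ehat v (τ v) := by
    intro v hv
    rcases hcover v hv with hc | hc
    · exact hUvS v hc
    · exact hUvM v hc
  constructor
  · -- existence
    refine ⟨Λ, Ehat, ?_, ?_, ?_, ?_⟩
    · exact Set.ncard_image_of_injOn (fun a ha b hb =>
        hτinjM a ha b hb)
    · intro w hw u
      exact hE_out w hw u
    · intro v hv
      exact ⟨τ v, hUsimple v hv⟩
    · intro m c hcyc hsimp
      obtain ⟨j0, -, hj0min⟩ := Finset.exists_min_image (Finset.univ : Finset (Fin (m+1)))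
        (fun j => N (c j)) ⟨0, Finset.mem_univ 0⟩
      refine ⟨τ (c j0), ?_, j0, hUsimple (c j0) (hsimp j0)⟩
      intro j hj
      have h1 : N (τ (c j0)) < N (c j0) := hNdec (c j0) (hsimp j0)
      have h2 := hj0min j (Finset.mem_univ j)
      rw [← hj] at h1
      omega
  · -- lower bound
    intro Λ' Ehat' hctrl hP1 hP2
    have hwit : ∀ v : V, ∃ w, v ∈ Mbar E O → (UniqueInNbr Ehat' v w ∧ w ∈ Λ') := by
      intro v
      by_cases hv : v ∈ Mbar E O
      · obtain ⟨w, hw⟩ := hP1 v ((hM_mem v).mp hv).1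
        refine ⟨w, fun _ => ⟨hw, ?_⟩⟩
        by_contra hwΛ
        apply ((hM_mem v).mp hv).2
        refine ⟨w, (hctrl w hwΛ v).mp hw.1, fun u' h' => ?_⟩
        exact hw.2 u' ((hctrl w hwΛ u').mpr h')
      · exact ⟨v, fun h => absurd h hv⟩
    choose g hg using hwit
    apply Set.ncard_le_ncard_of_injOn g (fun v hv => (hg v hv).2) _ (Set.toFinite Λ')
    intro v1 h1 v2 h2 heq
    exact huniq (hg v1 h1).1 (heq ▸ (hg v2 h2).1)
end

section
/- Let G be an arbitrary marked digraph. Then every set Λ ⊆ V for which some control of Λ yields a marked digraph satisfying both Property P1 and Property P2 has cardinality at least |M̄_G| + |S²_G|; that is, N*_G ≥ |M̄_G| + |S²_G|. -/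
/-- An observed-path-compatible cycle (OP-CC): a directed cycle in which each
vertex is the unique in-neighbor of its successor (indices taken cyclically). -/
def IsOPCC {V : Type*} (E : V → V → Prop) {m : ℕ} (c : Fin (m + 1) → V) : Prop :=
  Function.Injective c ∧ ∀ j, UniqueInNbr E (c j) (c (j + 1))

/-- `S2 E O` is the collection of (vertex sets of) OP-CCs consisting entirely
of simple vertices that do not satisfy Property P2. -/
def S2 {V : Type*} (E : V → V → Prop) (O : Set V) : Set (Set V) :=
  {S | ∃ (m : ℕ) (c : Fin (m + 1) → V),
        IsOPCC E c ∧ (∀ j, c j ∉ O) ∧ ¬ CycleSatisfiesP2 E c ∧ Set.range c = S}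

/-!
In the controlled digraph every vertex has at most one unique in-neighbor. Each vertex of `M̄_G`
must become the unique in-neighbor of a controlled vertex, and so must some vertex of each cycle
of `S²_G`: otherwise the cycle survives in the controlled digraph and its Property P2 witness
would be an uncontrolled vertex, hence a witness already in `G`. The singletons of `M̄_G` and the
cycles of `S²_G` are pairwise disjoint, so the controlled vertices charged to them are distinct.
-/

open scoped Fin.CommRing

theorem UniqueInNbr.unique {V : Type*} {E : V → V → Prop} {u u' w : V}
    (hu : UniqueInNbr E u w) (hu' : UniqueInNbr E u' w) : u' = u :=
  hu.2 u' hu'.1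

theorem Control.uniqueInNbr_iff {V : Type*} {E Ehat : V → V → Prop} {Λ : Set V}
    (hctrl : Control E Ehat Λ) {u w : V} (hw : w ∉ Λ) :
    UniqueInNbr Ehat u w ↔ UniqueInNbr E u w := by
  simp only [UniqueInNbr, hctrl w hw]

theorem Fin.forall_of_add_one_imp {n : ℕ} {P : Fin (n + 1) → Prop} {a : Fin (n + 1)}
    (ha : P a) (hP : ∀ j, P (j + 1) → P j) (j : Fin (n + 1)) : P j := by
  have hsub : ∀ t : ℕ, P (a - t) := by
    intro t
    induction t with
    | zero => simpa using ha
    | succ t ih =>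
      have hsucc : a - ↑(t + 1) + 1 = a - t := by push_cast; ring
      exact hP _ (hsucc ▸ ih)
  simpa using hsub (a - j).val

section OPCC

variable {V : Type*} {E : V → V → Prop}

theorem mem_range_of_uniqueInNbr {m : ℕ} {c : Fin (m + 1) → V}
    (hc : ∀ j, UniqueInNbr E (c j) (c (j + 1))) {x y : V} (hxy : UniqueInNbr E x y)
    (hy : y ∈ Set.range c) : x ∈ Set.range c := by
  obtain ⟨k, rfl⟩ := hy
  refine ⟨k - 1, ?_⟩
  have hk := hc (k - 1)
  rw [sub_add_cancel] at hk
  exact (hk.unique hxy).symm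

theorem range_subset_of_mem_range {m m' : ℕ} {c : Fin (m + 1) → V} {c' : Fin (m' + 1) → V}
    (hc : ∀ j, UniqueInNbr E (c j) (c (j + 1))) (hc' : ∀ j, UniqueInNbr E (c' j) (c' (j + 1)))
    {a : Fin (m + 1)} (ha : c a ∈ Set.range c') : Set.range c ⊆ Set.range c' := by
  rintro _ ⟨j, rfl⟩
  exact Fin.forall_of_add_one_imp (P := fun j => c j ∈ Set.range c') ha
    (fun j hj => mem_range_of_uniqueInNbr hc' (hc j) hj) j

theorem S2_pairwiseDisjoint (O : Set V) : (S2 E O).PairwiseDisjoint id := by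
  rintro _ ⟨m, c, ⟨-, hc⟩, -, -, rfl⟩ _ ⟨m', c', ⟨-, hc'⟩, -, -, rfl⟩ hne
  refine Set.disjoint_left.2 ?_
  rintro _ ⟨a, rfl⟩ ⟨a', ha'⟩
  exact hne ((range_subset_of_mem_range hc hc' ⟨a', ha'⟩).antisymm
    (range_subset_of_mem_range hc' hc ⟨a, ha'.symm⟩))

theorem notMem_Mbar_of_mem_S2 {O : Set V} {S : Set V} (hS : S ∈ S2 E O) {x : V}
    (hx : x ∈ S) : x ∉ Mbar E O := by
  obtain ⟨m, c, ⟨-, hc⟩, -, -, rfl⟩ := hS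
  obtain ⟨j, rfl⟩ := hx
  exact fun hj => hj.2 ⟨c (j + 1), hc j⟩

theorem disjoint_image_singleton_Mbar_S2 (O : Set V) :
    Disjoint ((fun v => {v}) '' Mbar E O) (S2 E O) := by
  refine Set.disjoint_left.2 ?_
  rintro _ ⟨v, hv, rfl⟩ hS
  exact notMem_Mbar_of_mem_S2 hS rfl hv

theorem pairwiseDisjoint_image_singleton_Mbar_union_S2 (O : Set V) :
    ((fun v => {v}) '' Mbar E O ∪ S2 E O).PairwiseDisjoint id := by
  refine Set.pairwiseDisjoint_union.2 ⟨?_, S2_pairwiseDisjoint O, ?_⟩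
  · rintro _ ⟨v, -, rfl⟩ _ ⟨v', -, rfl⟩ hne
    exact Set.disjoint_singleton.2 fun h => hne (h ▸ rfl)
  · rintro _ ⟨v, hv, rfl⟩ S hS -
    exact Set.disjoint_singleton_left.2 fun hvS => notMem_Mbar_of_mem_S2 hS hvS hv

theorem ncard_image_singleton_Mbar_union_S2 [Finite V] (O : Set V) :
    ((fun v => {v}) '' Mbar E O ∪ S2 E O).ncard = (Mbar E O).ncard + (S2 E O).ncard := by
  rw [Set.ncard_union_eq (disjoint_image_singleton_Mbar_S2 O) (Set.toFinite _) (Set.toFinite _),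
    Set.ncard_image_of_injective _ Set.singleton_injective]

end OPCC

section Control

variable {V : Type*} {E Ehat : V → V → Prop} {O Λ : Set V}

theorem exists_mem_uniqueInNbr_of_mem_Mbar (hctrl : Control E Ehat Λ)
    (hP1 : SatisfiesP1 Ehat O) {v : V} (hv : v ∈ Mbar E O) :
    ∃ w ∈ Λ, UniqueInNbr Ehat v w := by
  obtain ⟨w, hw⟩ := hP1 v hv.1
  by_cases hwΛ : w ∈ Λ
  · exact ⟨w, hwΛ, hw⟩
  · exact (hv.2 ⟨w, (hctrl.uniqueInNbr_iff hwΛ).1 hw⟩).elim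

/-- Off the cycle, `w` would witness Property P2 in `E`. -/
theorem IsOPCC.eq_succ_of_uniqueInNbr {m : ℕ} {c : Fin (m + 1) → V} (hc : IsOPCC E c)
    (hnP2 : ¬ CycleSatisfiesP2 E c) (hctrl : Control E Ehat Λ) {j : Fin (m + 1)} {w : V}
    (hwΛ : w ∉ Λ) (hw : UniqueInNbr Ehat (c j) w) : w = c (j + 1) := by
  have hwE : UniqueInNbr E (c j) w := (hctrl.uniqueInNbr_iff hwΛ).1 hw
  obtain ⟨k, rfl⟩ : ∃ k, c k = w := by
    by_contra! hoff
    exact hnP2 ⟨w, hoff, j, hwE⟩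
  have hpred := hc.2 (k - 1)
  rw [sub_add_cancel] at hpred
  have hjk : k - 1 = j := hc.1 (hwE.unique hpred)
  rw [← hjk, sub_add_cancel]

/-- Otherwise, by Property P1 of the controlled digraph, `c` is also a cycle there, and its
Property P2 witness is uncontrolled, hence a witness in `E`. -/
theorem exists_mem_uniqueInNbr_of_mem_S2 (hctrl : Control E Ehat Λ)
    (hP1 : SatisfiesP1 Ehat O) (hP2 : SatisfiesP2 Ehat O) {S : Set V} (hS : S ∈ S2 E O) :
    ∃ u ∈ S, ∃ w ∈ Λ, UniqueInNbr Ehat u w := by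
  obtain ⟨m, c, hc, hsimple, hnP2, rfl⟩ := hS
  by_contra! hnone
  have hfree : ∀ j w, UniqueInNbr Ehat (c j) w → w ∉ Λ :=
    fun j w hw hwΛ => hnone (c j) ⟨j, rfl⟩ w hwΛ hw
  have hcycle : IsCycle Ehat c := by
    refine ⟨hc.1, fun j => ?_⟩
    obtain ⟨w, hw⟩ := hP1 (c j) (hsimple j)
    rw [← hc.eq_succ_of_uniqueInNbr hnP2 hctrl (hfree j w hw) hw]
    exact hw.1
  obtain ⟨v, hvoff, j, hv⟩ := hP2 m c hcycle hsimple
  exact hnP2 ⟨v, hvoff, j, (hctrl.uniqueInNbr_iff (hfree j v hv)).1 hv⟩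

end Control

/-- The map sending each set of `𝒮` to a vertex of `Λ` it supplies with its unique in-neighbor
is injective, since a vertex has only one unique in-neighbor. -/
theorem ncard_le_of_pairwiseDisjoint {V : Type*} {E : V → V → Prop} {Λ : Set V}
    (hΛ : Λ.Finite) {𝒮 : Set (Set V)} (hdisj : 𝒮.PairwiseDisjoint id)
    (h𝒮 : ∀ S ∈ 𝒮, ∃ u ∈ S, ∃ w ∈ Λ, UniqueInNbr E u w) : 𝒮.ncard ≤ Λ.ncard := by
  rcases 𝒮.eq_empty_or_nonempty with rfl | ⟨S₀, hS₀⟩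
  · simp
  obtain ⟨v₀, -⟩ := h𝒮 S₀ hS₀
  have : Nonempty V := ⟨v₀⟩
  choose! u hu w hw huw using h𝒮
  refine Set.ncard_le_ncard_of_injOn w hw (fun S hS S' hS' hSS' => ?_) hΛ
  by_contra hne
  have huS' := huw S' hS'
  rw [← hSS'] at huS'
  have hu' : u S ∈ S' := (huw S hS).unique huS' ▸ hu S' hS'
  exact Set.disjoint_left.1 (hdisj hS hS' hne) (hu S hS) hu'

/-- For an arbitrary marked digraph, every controlled set whose control yields
a marked digraph satisfying Properties P1 and P2 has cardinality at least
`|M̄_G| + |S²_G|`. -/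
theorem card_controlled_ge_Mbar_add_S2 {V : Type*} [Fintype V]
    (E : V → V → Prop) (O : Set V)
    (Λ : Set V) (Ehat : V → V → Prop)
    (hctrl : Control E Ehat Λ)
    (hP1 : SatisfiesP1 Ehat O) (hP2 : SatisfiesP2 Ehat O) :
    (Mbar E O).ncard + (S2 E O).ncard ≤ Λ.ncard := by
  rw [← ncard_image_singleton_Mbar_union_S2]
  refine ncard_le_of_pairwiseDisjoint (E := Ehat) (Set.toFinite Λ)
    (pairwiseDisjoint_image_singleton_Mbar_union_S2 O) ?_
  rintro S (⟨v, hv, rfl⟩ | hS)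
  · exact ⟨v, rfl, exists_mem_uniqueInNbr_of_mem_Mbar hctrl hP1 hv⟩
  · exact exists_mem_uniqueInNbr_of_mem_S2 hctrl hP1 hP2 hS
end

section
/- Let G be a marked digraph with marked set O that satisfies both Property P1 and Property P2, and let ζ ∈ O. The marked digraph obtained from G by removing the mark of ζ (i.e., with marked set O \ {ζ}) fails to satisfy both Property P1 and Property P2 if and only if either (1) no vertex of G has ζ as its unique in-neighbor (so ζ, now simple, does not satisfy Property P1), or (2) ζ lies on an observed-path-compatible cycle C such that ζ is the only marked vertex on C and C does not satisfy Property P2. -/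
/-- Observability preservation under a single sensor failure: for a marked
digraph satisfying Properties P1 and P2 and a marked vertex `ζ`, removing the
mark of `ζ` destroys Properties P1 and P2 iff either no vertex has `ζ` as its
unique in-neighbor, or `ζ` lies on an OP-CC on which it is the only marked
vertex and which does not satisfy Property P2. -/
theorem sensor_failure_iff {V : Type*} [Fintype V]
    (E : V → V → Prop) (O : Set V)
    (hP1 : SatisfiesP1 E O) (hP2 : SatisfiesP2 E O)
    (ζ : V) (hζ : ζ ∈ O) :
    ¬ (SatisfiesP1 E (O \ {ζ}) ∧ SatisfiesP2 E (O \ {ζ})) ↔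
      ((¬ ∃ v, UniqueInNbr E ζ v) ∨
       (∃ (m : ℕ) (c : Fin (m + 1) → V), IsOPCC E c ∧ (∃ j, c j = ζ) ∧
          (∀ j, c j ∈ O → c j = ζ) ∧ ¬ CycleSatisfiesP2 E c)) := by
  constructor
  · intro hfail
    by_cases hp1 : SatisfiesP1 E (O \ {ζ})
    · -- new P1 holds, so new P2 fails
      have hp2 : ¬ SatisfiesP2 E (O \ {ζ}) := fun h => hfail ⟨hp1, h⟩
      right
      unfold SatisfiesP2 at hp2
      push_neg at hp2
      obtain ⟨m, c, hc, hcO, hcp2⟩ := hp2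
      -- there is a marked vertex on the cycle, necessarily ζ
      have hj0 : ∃ j0, c j0 = ζ := by
        by_contra hno
        push_neg at hno
        have hall : ∀ j, c j ∉ O := by
          intro j hj
          exact hno j (by
            have := hcO j
            simp only [Set.mem_diff, Set.mem_singleton_iff, not_and, not_not] at this
            exact this hj)
        exact hcp2 (hP2 m c hc hall)
      obtain ⟨j0, hj0⟩ := hj0
      -- each cycle vertex has a successor on the cycle of which it is the unique in-neighbor
      have key : ∀ j, ∃ k, UniqueInNbr E (c j) (c k) := by
        intro j
        obtain ⟨v, hv⟩ := hp1 (c j) (hcO j)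
        by_cases hvc : ∃ k, c k = v
        · obtain ⟨k, rfl⟩ := hvc; exact ⟨k, hv⟩
        · exact absurd ⟨v, fun k hk => hvc ⟨k, hk⟩, j, hv⟩ hcp2
      choose f hf using key
      have hfinj : Function.Injective f := by
        intro j j' hjj'
        have h1 := hf j
        have h2 := hf j'
        rw [hjj'] at h1
        exact hc.1 (h2.2 _ h1.1)
      have hfbij : Function.Bijective f := Finite.injective_iff_bijective.mp hfinj
      set σ : Equiv.Perm (Fin (m + 1)) := Equiv.ofBijective f hfbij with hσ
      have hσap : ∀ j, σ j = f j := fun j => rfl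
      have hσu : ∀ j, UniqueInNbr E (c j) (c (σ j)) := fun j => hf j
      have huniq : ∀ j k, UniqueInNbr E (c j) (c k) → k = σ j := by
        intro j k h
        have h2 := hσu (σ.symm k)
        rw [Equiv.apply_symm_apply] at h2
        have : c (σ.symm k) = c j := h.2 _ h2.1
        have : σ.symm k = j := hc.1 this
        rw [← this, Equiv.apply_symm_apply]
      -- minimal period of j0 under σ
      have hper : ∃ n, 0 < n ∧ (σ ^ n) j0 = j0 :=
        ⟨orderOf σ, orderOf_pos σ, by rw [pow_orderOf_eq_one]; rfl⟩
      classical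
      set r := Nat.find hper with hrdef
      obtain ⟨hr0, hrfix⟩ : 0 < r ∧ (σ ^ r) j0 = j0 := Nat.find_spec hper
      have hrmin : ∀ n, 0 < n → n < r → (σ ^ n) j0 ≠ j0 := by
        intro n hn hnr hfix
        exact Nat.find_min hper hnr ⟨hn, hfix⟩
      set m' := r - 1 with hm'def
      have hre : m' + 1 = r := Nat.succ_pred_eq_of_pos hr0
      -- powers fixing j0
      have hmulr : ∀ q, (σ ^ (r * q)) j0 = j0 := by
        intro q
        induction q with
        | zero => simp
        | succ q ih =>
          have : r * (q + 1) = r * q + r := by ring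
          rw [this, pow_add]
          show (σ ^ (r * q)) ((σ ^ r) j0) = j0
          rw [hrfix, ih]
      have hmod : ∀ n : ℕ, (σ ^ n) j0 = (σ ^ (n % r)) j0 := by
        intro n
        conv_lhs => rw [← Nat.mod_add_div n r]
        rw [pow_add]
        show (σ ^ (n % r)) ((σ ^ (r * (n / r))) j0) = _
        rw [hmulr]
      -- distinct powers below r give distinct points
      have key2 : ∀ a b : ℕ, a < r → b < r → (σ ^ a) j0 = (σ ^ b) j0 → a = b := by
        have half : ∀ a b : ℕ, a ≤ b → b < r → (σ ^ a) j0 = (σ ^ b) j0 → a = b := by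
          intro a b hab hbr heq
          by_contra hne
          have hd : 0 < b - a := by omega
          have : (σ ^ b) j0 = (σ ^ a) ((σ ^ (b - a)) j0) := by
            rw [← Equiv.Perm.mul_apply, ← pow_add]
            congr 2
            omega
          rw [this] at heq
          have := (σ ^ a).injective heq.symm
          exact hrmin (b - a) hd (by omega) this
        intro a b ha hb heq
        rcases le_total a b with h | h
        · exact half a b h hb heq
        · exact (half b a h ha heq.symm).symm
      -- the OP-CC
      have hstep : ∀ i : Fin (m' + 1),
          c ((σ ^ (((i + 1 : Fin (m' + 1))) : ℕ)) j0) = c (σ ((σ ^ (i : ℕ)) j0)) := by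
        intro i
        have hval : (((i + 1 : Fin (m' + 1))) : ℕ) = ((i : ℕ) + 1) % (m' + 1) := by
          simp [Fin.add_def, Nat.add_mod_mod]
        have hn : ((i : ℕ) + 1) % (m' + 1) = ((i : ℕ) + 1) % r :=
          congrArg (fun t => ((i : ℕ) + 1) % t) hre
        calc c ((σ ^ (((i + 1 : Fin (m' + 1))) : ℕ)) j0)
            = c ((σ ^ (((i : ℕ) + 1) % r)) j0) := by rw [hval, hn]
          _ = c ((σ ^ ((i : ℕ) + 1)) j0) := by rw [← hmod]
          _ = c (σ ((σ ^ (i : ℕ)) j0)) := by rw [pow_succ']; rfl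
      refine ⟨m', fun i => c ((σ ^ (i : ℕ)) j0), ?_, ?_, ?_, ?_⟩
      · constructor
        · intro i i' hii'
          have h1 : (σ ^ (i : ℕ)) j0 = (σ ^ ((i' : Fin (m' + 1)) : ℕ)) j0 := hc.1 hii'
          exact Fin.ext (key2 _ _ (hre ▸ i.isLt) (hre ▸ i'.isLt) h1)
        · intro i
          show UniqueInNbr E (c ((σ ^ (i : ℕ)) j0))
            (c ((σ ^ (((i + 1 : Fin (m' + 1))) : ℕ)) j0))
          rw [hstep i]
          exact hσu _
      · refine ⟨0, ?_⟩
        simp [hj0]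
      · intro i hi
        have := hcO ((σ ^ (i : ℕ)) j0)
        simp only [Set.mem_diff, Set.mem_singleton_iff, not_and, not_not] at this
        exact this hi
      · rintro ⟨v, hvoff, i, hvin⟩
        by_cases hvc : ∃ k, c k = v
        · obtain ⟨k, rfl⟩ := hvc
          have hk := huniq _ _ hvin
          apply hvoff (i + 1)
          show c ((σ ^ (((i + 1 : Fin (m' + 1))) : ℕ)) j0) = c k
          rw [hstep i, hk]
        · exact hcp2 ⟨v, fun k hk => hvc ⟨k, hk⟩, _, hvin⟩
    · -- new P1 fails: it fails at ζ
      left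
      unfold SatisfiesP1 at hp1
      push_neg at hp1
      obtain ⟨v, hvO, hv⟩ := hp1
      have hvζ : v = ζ := by
        by_contra hne
        have : v ∉ O := by
          intro hvO'
          exact hvO ⟨hvO', by simpa using hne⟩
        obtain ⟨v', hv'⟩ := hP1 v this
        exact hv v' hv'
      rintro ⟨v', hv'⟩
      exact hv v' (hvζ ▸ hv')
  · rintro (hno | ⟨m, c, hopcc, ⟨j0, hj0⟩, honly, hnp2⟩) ⟨h1, h2⟩
    · obtain ⟨v', hv'⟩ := h1 ζ (by simp)
      exact hno ⟨v', hv'⟩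
    · have hcyc : IsCycle E c := ⟨hopcc.1, fun j => (hopcc.2 j).1⟩
      have hall : ∀ j, c j ∉ O \ {ζ} := by
        intro j hj
        rw [Set.mem_diff, Set.mem_singleton_iff] at hj
        exact hj.2 (honly j hj.1)
      exact hnp2 (h2 m c hcyc hall)
end

section
/- Let p be a prime, A ∈ F_p^{n×n}, and consider the finite-field network x[k+1] = A x[k] over F_p with outputs y_p[k] = x_p[k] for p = 1,…,h. If the interaction digraph of A, marked at {1,…,h}, satisfies both Property P1 and Property P2, then the network is strongly structurally observable: for every matrix A' ∈ F_p^{n×n} having nonzero entries in exactly the same positions as A, the network x[k+1] = A' x[k] with the same outputs is observable. -/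
open Matrix

/-- If the interaction digraph of a finite-field network, marked at the output
indices, satisfies Properties P1 and P2, then the network is strongly
structurally observable: every network whose matrix has the same zero pattern
is observable. -/
theorem ffn_strongly_structurally_observable {p n h : ℕ} (hp : p.Prime)
    (hh1 : 1 ≤ h) (hhn : h ≤ n)
    (A : Matrix (Fin n) (Fin n) (ZMod p))
    (hP1 : SatisfiesP1 (fun i j => A j i ≠ 0) {i : Fin n | (i : ℕ) < h})
    (hP2 : SatisfiesP2 (fun i j => A j i ≠ 0) {i : Fin n | (i : ℕ) < h}) :
    ∀ A' : Matrix (Fin n) (Fin n) (ZMod p),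
      (∀ i j, A' i j ≠ 0 ↔ A i j ≠ 0) →
      ∀ x y : Fin n → ZMod p, x ≠ y →
        ∃ (k : ℕ) (q : Fin n), (q : ℕ) < h ∧
          ((A' ^ k) *ᵥ x) q ≠ ((A' ^ k) *ᵥ y) q := by
  haveI : Fact p.Prime := ⟨hp⟩
  intro A' hpat x y hxy
  by_contra hcon
  push_neg at hcon
  -- hcon : ∀ k q, ↑q < h → (A' ^ k *ᵥ x) q = (A' ^ k *ᵥ y) q
  set E : Fin n → Fin n → Prop := fun i j => A j i ≠ 0 with hEdef
  set Z : ℕ → Fin n → ZMod p := fun k => (A' ^ k) *ᵥ (x - y) with hZdef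
  have hZsucc : ∀ k, Z (k + 1) = A' *ᵥ Z k := by
    intro k
    simp only [hZdef, Matrix.mulVec_mulVec, ← pow_succ']
  have hmark : ∀ k (q : Fin n), (q : ℕ) < h → Z k q = 0 := by
    intro k q hq
    have hc := hcon k q hq
    simp only [hZdef, Matrix.mulVec_sub, Pi.sub_apply]
    rw [hc, sub_self]
  -- supports
  set S : ℕ → Finset (Fin n) := fun k => Finset.univ.filter (fun v => Z k v ≠ 0) with hSdef
  have hmemS : ∀ k v, v ∈ S k ↔ Z k v ≠ 0 := by
    intro k v; simp [hSdef]
  have hsimp : ∀ k v, v ∈ S k → ¬ ((v : ℕ) < h) := by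
    intro k v hv hlt
    exact (hmemS k v).1 hv (hmark k v hlt)
  -- key propagation lemma
  have key : ∀ (k : ℕ) (u w : Fin n), UniqueInNbr E u w → Z k u ≠ 0 → Z (k + 1) w ≠ 0 := by
    intro k u w hU hu
    rw [hZsucc k]
    have : (A' *ᵥ Z k) w = A' w u * Z k u := by
      show (Finset.univ.sum fun v => A' w v * Z k v) = A' w u * Z k u
      refine Finset.sum_eq_single u ?_ (by simp)
      intro b _ hb
      have hb0 : A' w b = 0 := by
        by_contra hb'
        exact hb (hU.2 b ((hpat w b).1 hb'))
      rw [hb0, zero_mul]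
    rw [this]
    exact mul_ne_zero ((hpat w u).2 hU.1) hu
  -- choice function from P1
  have hP1' : ∀ v : Fin n, ¬ ((v : ℕ) < h) → ∃ v', UniqueInNbr E v v' := by
    intro v hv; exact hP1 v hv
  choose φ0 hφ0 using hP1'
  set Φ : Fin n → Fin n := fun v =>
    if hv : (v : ℕ) < h then v else φ0 v hv with hΦdef
  have hΦ : ∀ v : Fin n, ¬ ((v : ℕ) < h) → UniqueInNbr E v (Φ v) := by
    intro v hv
    simp only [hΦdef, dif_neg hv]
    exact hφ0 v hv
  have hΦinj : ∀ u v : Fin n, ¬ ((u : ℕ) < h) → ¬ ((v : ℕ) < h) → Φ u = Φ v → u = v := by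
    intro u v hu hv heq
    have h1 : E u (Φ v) := heq ▸ (hΦ u hu).1
    exact (hΦ v hv).2 u h1
  -- support grows
  have hmemΦ : ∀ k v, v ∈ S k → Φ v ∈ S (k + 1) := by
    intro k v hv
    have hs := hsimp k v hv
    exact (hmemS (k + 1) (Φ v)).2 (key k v (Φ v) (hΦ v hs) ((hmemS k v).1 hv))
  have himg : ∀ k, (S k).image Φ ⊆ S (k + 1) := by
    intro k
    intro w hw
    obtain ⟨v, hv, rfl⟩ := Finset.mem_image.1 hw
    exact hmemΦ k v hv
  have hcardimg : ∀ k, ((S k).image Φ).card = (S k).card := by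
    intro k
    apply Finset.card_image_of_injOn
    intro u hu v hv heq
    exact hΦinj u v (hsimp k u hu) (hsimp k v hv) heq
  set f : ℕ → ℕ := fun k => (S k).card with hfdef
  have hfle : ∀ k, f k ≤ f (k + 1) := by
    intro k
    calc f k = ((S k).image Φ).card := (hcardimg k).symm
    _ ≤ f (k + 1) := Finset.card_le_card (himg k)
  have hmono : Monotone f := monotone_nat_of_le_succ hfle
  have hfb : ∀ k, f k ≤ n := by
    intro k
    simpa using Finset.card_le_card (Finset.subset_univ (S k))
  obtain ⟨K, hK⟩ : ∃ K, ∀ k, K ≤ k → f k = f K := by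
    have hbdd : BddAbove (Set.range f) := ⟨n, by rintro _ ⟨k, rfl⟩; exact hfb k⟩
    obtain ⟨K, hKe⟩ := Nat.sSup_mem (Set.range_nonempty f) hbdd
    exact ⟨K, fun k hk => le_antisymm (hKe ▸ le_csSup hbdd ⟨k, rfl⟩) (hmono hk)⟩
  -- exact image after K
  have hexact : ∀ k, K ≤ k → S (k + 1) = (S k).image Φ := by
    intro k hk
    refine (Finset.eq_of_subset_of_card_le (himg k) ?_).symm
    rw [hcardimg k]
    have h1 : f (k + 1) = f K := hK (k + 1) (le_trans hk (Nat.le_succ k))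
    have h2 : f k = f K := hK k hk
    exact le_of_eq (h1.trans h2.symm)
  have hIter : ∀ (j k : ℕ), K ≤ k → S (k + j) = (S k).image (Φ^[j]) := by
    intro j
    induction j with
    | zero => intro k hk; simp
    | succ j ih =>
      intro k hk
      have : k + (j + 1) = (k + j) + 1 := by ring
      rw [this, hexact (k + j) (le_trans hk (Nat.le_add_right k j)), ih k hk,
        Finset.image_image, Function.iterate_succ']
  -- pigeonhole on supports
  obtain ⟨a, b, hab, heq⟩ := Finite.exists_ne_map_eq_of_infinite (fun j : ℕ => S (K + j))
  wlog hlt : a < b generalizing a b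
  · exact this b a (Ne.symm hab) heq.symm (by omega)
  set k0 := K + a with hk0def
  have hk0K : K ≤ k0 := Nat.le_add_right K a
  set T := b - a with hTdef
  have hT : 0 < T := by omega
  have hST : S (k0 + T) = S k0 := by
    have : k0 + T = K + b := by omega
    rw [this]; exact heq.symm
  -- nonemptiness
  have hS0 : (S 0).Nonempty := by
    have : x - y ≠ 0 := sub_ne_zero.mpr hxy
    obtain ⟨v, hv⟩ := Function.ne_iff.1 this
    refine ⟨v, (hmemS 0 v).2 ?_⟩
    simpa [hZdef] using hv
  have hSk0 : (S k0).Nonempty := by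
    rw [← Finset.card_pos]
    calc 0 < f 0 := Finset.card_pos.2 hS0
    _ ≤ f k0 := hmono (Nat.zero_le k0)
  obtain ⟨v0, hv0⟩ := hSk0
  -- iterates of v0 stay in supports
  have hmemIter : ∀ j : ℕ, Φ^[j] v0 ∈ S (k0 + j) := by
    intro j
    rw [hIter j k0 hk0K]
    exact Finset.mem_image_of_mem _ hv0
  have hsimpIter : ∀ j : ℕ, ¬ ((Φ^[j] v0 : Fin n) : ℕ) < h :=
    fun j => hsimp _ _ (hmemIter j)
  -- cancellation
  have hcancel : ∀ (i j : ℕ), i ≤ j → Φ^[i] v0 = Φ^[j] v0 → Φ^[j - i] v0 = v0 := by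
    intro i
    induction i with
    | zero => intro j _ hj; rw [Nat.sub_zero]; exact hj.symm
    | succ i ih =>
      intro j hij hj
      obtain ⟨j', rfl⟩ : ∃ j', j = j' + 1 := ⟨j - 1, by omega⟩
      have hi' : i ≤ j' := by omega
      have : Φ^[i] v0 = Φ^[j'] v0 := by
        rw [Function.iterate_succ_apply', Function.iterate_succ_apply'] at hj
        exact hΦinj _ _ (hsimpIter i) (hsimpIter j') hj
      have := ih j' hi' this
      simpa using this
  -- v0 is periodic
  have hperiodic : ∃ t, 0 < t ∧ Φ^[t] v0 = v0 := by
    -- the sequence j ↦ Φ^[j] v0 repeats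
    obtain ⟨i, j, hij, hIJ⟩ := Finite.exists_ne_map_eq_of_infinite (fun j : ℕ => Φ^[j] v0)
    rcases lt_or_gt_of_ne hij with hlt' | hlt'
    · exact ⟨j - i, by omega, hcancel i j (le_of_lt hlt') hIJ⟩
    · exact ⟨i - j, by omega, hcancel j i (le_of_lt hlt') hIJ.symm⟩
  set P : ℕ → Prop := fun t => 0 < t ∧ Φ^[t] v0 = v0 with hPdef
  have hPex : ∃ t, P t := hperiodic
  set t0 := Nat.find hPex with ht0def
  have ht0 : P t0 := Nat.find_spec hPex
  obtain ⟨m, hm⟩ : ∃ m, t0 = m + 1 := ⟨t0 - 1, by omega⟩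
  -- the cycle
  set c : Fin (m + 1) → Fin n := fun j => Φ^[(j : ℕ)] v0 with hcdef
  have hcinj : Function.Injective c := by
    have haux : ∀ i j : Fin (m + 1), (i : ℕ) < (j : ℕ) → c i = c j → False := by
      intro i j hij hc
      have := hcancel i j (le_of_lt hij) hc
      have hlt : (j : ℕ) - (i : ℕ) < t0 := by omega
      exact Nat.find_min hPex hlt ⟨by omega, this⟩
    intro i j hc
    rcases lt_trichotomy (i : ℕ) (j : ℕ) with hl | he | hl
    · exact absurd hc (fun hc => haux i j hl hc)
    · exact Fin.ext he
    · exact absurd hc.symm (fun hc => haux j i hl hc)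
  have hstep : ∀ j : Fin (m + 1), c (j + 1) = Φ (c j) := by
    intro j
    have h1 : Φ (c j) = Φ^[(j : ℕ) + 1] v0 := (Function.iterate_succ_apply' Φ (j : ℕ) v0).symm
    have h2 : c (j + 1) = Φ^[((j : ℕ) + 1) % (m + 1)] v0 := by
      simp [hcdef, Fin.add_def]
    rw [h1, h2]
    rcases Nat.lt_or_ge ((j : ℕ) + 1) (m + 1) with hlt' | hge
    · rw [Nat.mod_eq_of_lt hlt']
    · have hj : (j : ℕ) + 1 = m + 1 := by omega
      rw [hj, Nat.mod_self, ← hm]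
      simp only [Function.iterate_zero_apply]
      exact (ht0.2).symm
  have hcyc : IsCycle E c := by
    refine ⟨hcinj, fun j => ?_⟩
    rw [hstep j]
    exact (hΦ (c j) (hsimpIter (j : ℕ))).1
  have hcsimple : ∀ j : Fin (m + 1), c j ∉ {i : Fin n | (i : ℕ) < h} := by
    intro j
    exact hsimpIter (j : ℕ)
  obtain ⟨w, hwoff, j0, hUw⟩ := hP2 m c hcyc hcsimple
  -- propagate to w
  set m1 := k0 + (j0 : ℕ) with hm1def
  have hcj0 : c j0 ∈ S m1 := hmemIter (j0 : ℕ)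
  have hZw : Z (m1 + 1) w ≠ 0 := key m1 (c j0) w hUw ((hmemS m1 (c j0)).1 hcj0)
  have hwS : w ∈ S (m1 + 1) := (hmemS (m1 + 1) w).2 hZw
  have hwsimple : ¬ ((w : Fin n) : ℕ) < h := hsimp (m1 + 1) w hwS
  -- w must be on the cycle : contradiction
  have hm1K : K ≤ m1 := le_trans hk0K (Nat.le_add_right k0 (j0 : ℕ))
  have hwin : w ∈ (S m1).image Φ := by rw [← hexact m1 hm1K]; exact hwS
  obtain ⟨u, hu, huw⟩ := Finset.mem_image.1 hwin
  have husimple : ¬ ((u : Fin n) : ℕ) < h := hsimp m1 u hu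
  have hEuw : E u w := huw ▸ (hΦ u husimple).1
  have hucj0 : u = c j0 := hUw.2 u hEuw
  have : c (j0 + 1) = w := by
    rw [hstep j0, ← hucj0, huw]
  exact hwoff (j0 + 1) this
end
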